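/- arXiv:2301.00679 — 12 statements merged into one kernel-verified Lean document; each statement's English description precedes it below -/
import Mathlib

section
/- Let α, β, γ be real numbers with 2α² ≥ β² + γ². Then for all real x ≥ 1, (T_α(x))² ≥ T_β(x) · T_γ(x), where T_δ(x) = ((x + √(x²−1))^δ + (x − √(x²−1))^δ)/2. -/
/-- Generalized Chebyshev function `T_γ(x) = ((x + √(x²−1))^γ + (x − √(x²−1))^γ)/2`. -/
noncomputable def chebT (γ x : ℝ) : ℝ :=
  ((x + Real.sqrt (x ^ 2 - 1)) ^ γ + (x - Real.sqrt (x ^ 2 - 1)) ^ γ) / 2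

/-- Key series inequality: `cosh p + cosh q ≤ cosh r + 1` when `p² + q² ≤ r²`. -/
lemma cosh_add_cosh_le (p q r : ℝ) (h : p ^ 2 + q ^ 2 ≤ r ^ 2) :
    Real.cosh p + Real.cosh q ≤ Real.cosh r + 1 := by
  have h1 := (Real.hasSum_cosh p).add (Real.hasSum_cosh q)
  have h2 := (Real.hasSum_cosh r).add (hasSum_ite_eq (0 : ℕ) (1 : ℝ))
  refine hasSum_le (fun n => ?_) h1 h2
  cases n with
  | zero => simp
  | succ k =>
    have hfac : (0:ℝ) < ((2 * (k+1)).factorial : ℝ) := by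
      exact_mod_cast Nat.factorial_pos _
    have hne : k + 1 ≠ 0 := Nat.succ_ne_zero k
    have hp : p ^ (2 * (k+1)) + q ^ (2 * (k+1)) ≤ r ^ (2 * (k+1)) := by
      have e1 : p ^ (2 * (k+1)) = (p ^ 2) ^ (k+1) := by rw [pow_mul]
      have e2 : q ^ (2 * (k+1)) = (q ^ 2) ^ (k+1) := by rw [pow_mul]
      have e3 : r ^ (2 * (k+1)) = (r ^ 2) ^ (k+1) := by rw [pow_mul]
      rw [e1, e2, e3]
      calc (p ^ 2) ^ (k+1) + (q ^ 2) ^ (k+1) ≤ (p ^ 2 + q ^ 2) ^ (k+1) :=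
            pow_add_pow_le (sq_nonneg p) (sq_nonneg q) hne
        _ ≤ (r ^ 2) ^ (k+1) := pow_le_pow_left₀ (by positivity) h _
    have he : (if k + 1 = 0 then (1:ℝ) else 0) = 0 := by simp
    rw [he, add_zero, ← add_div]
    exact div_le_div_of_nonneg_right hp hfac.le

lemma cosh_mul_cosh_le (a b c : ℝ) (h : 2 * a ^ 2 ≥ b ^ 2 + c ^ 2) :
    Real.cosh b * Real.cosh c ≤ Real.cosh a ^ 2 := by
  have key : Real.cosh (b + c) + Real.cosh (b - c) ≤ Real.cosh (2 * a) + 1 := by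
    apply cosh_add_cosh_le
    nlinarith [sq_nonneg (b - c), sq_nonneg (b + c)]
  have e1 : Real.cosh (b + c) + Real.cosh (b - c) = 2 * (Real.cosh b * Real.cosh c) := by
    rw [Real.cosh_add, Real.cosh_sub]; ring
  have e2 : Real.cosh (2 * a) = Real.cosh a ^ 2 + Real.sinh a ^ 2 := Real.cosh_two_mul a
  have e3 : Real.cosh a ^ 2 = Real.sinh a ^ 2 + 1 := Real.cosh_sq a
  linarith

theorem chebT_sq_ge (α β γ : ℝ) (h : 2 * α ^ 2 ≥ β ^ 2 + γ ^ 2) :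
    ∀ x : ℝ, 1 ≤ x → (chebT α x) ^ 2 ≥ chebT β x * chebT γ x := by
  intro x hx
  set s := Real.sqrt (x ^ 2 - 1) with hs
  have hx2 : (0:ℝ) ≤ x ^ 2 - 1 := by nlinarith
  have hs2 : s ^ 2 = x ^ 2 - 1 := Real.sq_sqrt hx2
  have hsnn : 0 ≤ s := Real.sqrt_nonneg _
  have hu : 0 < x + s := by nlinarith
  have hv : x - s = (x + s)⁻¹ := by
    field_simp
    nlinarith
  set L := Real.log (x + s) with hL
  have hcheb : ∀ δ : ℝ, chebT δ x = Real.cosh (δ * L) := by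
    intro δ
    have h1 : (x + s) ^ δ = Real.exp (δ * L) := by
      rw [Real.rpow_def_of_pos hu, hL]; ring_nf
    have h2 : (x - s) ^ δ = Real.exp (-(δ * L)) := by
      rw [hv, Real.inv_rpow hu.le, ← Real.rpow_neg hu.le δ, Real.rpow_def_of_pos hu, hL]; ring_nf
    rw [chebT, ← hs, h1, h2, Real.cosh_eq]
  rw [hcheb, hcheb, hcheb, ge_iff_le]
  exact cosh_mul_cosh_le (α * L) (β * L) (γ * L) (by nlinarith [sq_nonneg L])
end

section
/- Let α, β, γ be real numbers with 2α² ≥ β² + γ², and let x ≥ 1. Then (T_α(x))² = T_β(x) · T_γ(x) if and only if x = 1 or |α| = |β| = |γ|. -/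
open Real

/-- `sinh y < y * cosh y` for `y > 0`. -/
lemma sinh_lt_self_mul_cosh {y : ℝ} (hy : 0 < y) : Real.sinh y < y * Real.cosh y := by
  have hmono : StrictMonoOn (fun t => t * Real.cosh t - Real.sinh t) (Set.Ici 0) := by
    apply strictMonoOn_of_deriv_pos (convex_Ici _)
    · exact ((continuous_id.mul Real.continuous_cosh).sub Real.continuous_sinh).continuousOn
    · intro t ht
      rw [interior_Ici, Set.mem_Ioi] at ht
      have hd : HasDerivAt (fun t => t * Real.cosh t - Real.sinh t) (t * Real.sinh t) t := by
        have := ((hasDerivAt_id t).mul (Real.hasDerivAt_cosh t)).sub (Real.hasDerivAt_sinh t)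
        refine this.congr_deriv ?_; try simp only [id_eq]; ring
      rw [hd.deriv]
      exact mul_pos ht (Real.sinh_pos_iff.mpr ht)
  have := hmono (Set.mem_Ici.mpr le_rfl) (Set.mem_Ici.mpr hy.le) hy
  simp only [Real.sinh_zero, Real.cosh_zero] at this
  nlinarith

/-- monotonicity of `sinh y / y` in product form. -/
lemma sinh_mul_lt_sinh_mul {a b : ℝ} (ha : 0 < a) (hab : a < b) :
    Real.sinh a * b < Real.sinh b * a := by
  have hmono : StrictMonoOn (fun y => a * Real.sinh y - Real.sinh a * y) (Set.Ici a) := by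
    apply strictMonoOn_of_deriv_pos (convex_Ici _)
    · exact ((continuous_const.mul Real.continuous_sinh).sub
        (continuous_const.mul continuous_id)).continuousOn
    · intro t ht
      rw [interior_Ici, Set.mem_Ioi] at ht
      have hd : HasDerivAt (fun y => a * Real.sinh y - Real.sinh a * y)
          (a * Real.cosh t - Real.sinh a) t := by
        have := ((Real.hasDerivAt_sinh t).const_mul a).sub ((hasDerivAt_id t).const_mul (Real.sinh a))
        refine this.congr_deriv ?_
        simp only [id_eq, mul_one]
      rw [hd.deriv]
      have h1 : Real.sinh a < a * Real.cosh a := sinh_lt_self_mul_cosh ha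
      have h2 : Real.cosh a < Real.cosh t := by
        rw [Real.cosh_lt_cosh, abs_of_pos ha, abs_of_pos (ha.trans ht)]
        exact ht
      nlinarith
  have := hmono (Set.mem_Ici.mpr le_rfl) (Set.mem_Ici.mpr hab.le) hab
  simp only [] at this
  nlinarith

/-- The key strict inequality: `cosh P + cosh Q < cosh (√(P²+Q²)) + 1` for `P, Q > 0`. -/
lemma cosh_add_cosh_lt {P Q : ℝ} (hP : 0 < P) (hQ : 0 < Q) :
    Real.cosh P + Real.cosh Q < Real.cosh (Real.sqrt (P ^ 2 + Q ^ 2)) + 1 := by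
  have hmono : StrictMonoOn (fun q => Real.cosh (Real.sqrt (P ^ 2 + q ^ 2)) - Real.cosh q)
      (Set.Ici 0) := by
    apply strictMonoOn_of_deriv_pos (convex_Ici _)
    · apply ContinuousOn.sub _ Real.continuous_cosh.continuousOn
      exact (Real.continuous_cosh.comp (Real.continuous_sqrt.comp (by continuity))).continuousOn
    · intro q hq
      rw [interior_Ici, Set.mem_Ioi] at hq
      have hRpos : 0 < Real.sqrt (P ^ 2 + q ^ 2) := Real.sqrt_pos.mpr (by positivity)
      have hqR : q < Real.sqrt (P ^ 2 + q ^ 2) := by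
        have h1 : q = Real.sqrt (q ^ 2) := (Real.sqrt_sq hq.le).symm
        nth_rewrite 1 [h1]
        exact Real.sqrt_lt_sqrt (sq_nonneg q) (by nlinarith)
      have hinner : HasDerivAt (fun q : ℝ => P ^ 2 + q ^ 2) (2 * q) q := by
        simpa using (hasDerivAt_pow 2 q).const_add (P ^ 2)
      have hsq : HasDerivAt (fun q : ℝ => Real.sqrt (P ^ 2 + q ^ 2))
          (1 / (2 * Real.sqrt (P ^ 2 + q ^ 2)) * (2 * q)) q := by
        have := (Real.hasDerivAt_sqrt (x := P ^ 2 + q ^ 2) (by positivity)).comp q hinner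
        exact this.congr_deriv (by ring)
      have hd : HasDerivAt (fun q => Real.cosh (Real.sqrt (P ^ 2 + q ^ 2)) - Real.cosh q)
          (Real.sinh (Real.sqrt (P ^ 2 + q ^ 2)) * (1 / (2 * Real.sqrt (P ^ 2 + q ^ 2)) * (2 * q))
            - Real.sinh q) q := by
        have := ((Real.hasDerivAt_cosh (Real.sqrt (P ^ 2 + q ^ 2))).comp q hsq).sub
          (Real.hasDerivAt_cosh q)
        exact this.congr_deriv (by ring)
      rw [hd.deriv]
      have hlt := sinh_mul_lt_sinh_mul hq hqR
      rw [sub_pos]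
      have he : Real.sinh (Real.sqrt (P ^ 2 + q ^ 2)) * (1 / (2 * Real.sqrt (P ^ 2 + q ^ 2)) * (2 * q))
          = Real.sinh (Real.sqrt (P ^ 2 + q ^ 2)) * q / Real.sqrt (P ^ 2 + q ^ 2) := by
        field_simp
      rw [he, lt_div_iff₀ hRpos]
      exact hlt
  have h0 : (fun q => Real.cosh (Real.sqrt (P ^ 2 + q ^ 2)) - Real.cosh q) 0
      = Real.cosh P - 1 := by
    simp [Real.sqrt_sq hP.le]
  have := hmono (Set.mem_Ici.mpr le_rfl) (Set.mem_Ici.mpr hQ.le) hQ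
  rw [h0] at this
  simp only [] at this
  linarith

lemma cosh_abs_eq {u v : ℝ} (huv : Real.cosh u = Real.cosh v) : |u| = |v| :=
  le_antisymm (Real.cosh_le_cosh.mp huv.le) (Real.cosh_le_cosh.mp huv.ge)

/-- The core equality case for cosh. -/
lemma main_cosh {a b c L : ℝ} (h : b ^ 2 + c ^ 2 ≤ 2 * a ^ 2) (hL : 0 < L)
    (heq : Real.cosh (a * L) ^ 2 = Real.cosh (b * L) * Real.cosh (c * L)) :
    |a| = |b| ∧ |b| = |c| := by
  have h1 : Real.cosh (2 * a * L) + 1 = 2 * Real.cosh (a * L) ^ 2 := by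
    rw [show 2 * a * L = 2 * (a * L) by ring, Real.cosh_two_mul, Real.cosh_sq]
    ring
  have h2 : Real.cosh ((b + c) * L) + Real.cosh ((b - c) * L)
      = 2 * (Real.cosh (b * L) * Real.cosh (c * L)) := by
    rw [show (b + c) * L = b * L + c * L by ring, show (b - c) * L = b * L - c * L by ring,
      Real.cosh_add, Real.cosh_sub]
    ring
  have heq2 : Real.cosh (2 * a * L) + 1
      = Real.cosh ((b + c) * L) + Real.cosh ((b - c) * L) := by
    rw [h1, h2, heq]
  have hw2 : ((b + c) * L) ^ 2 + ((b - c) * L) ^ 2 ≤ (2 * a * L) ^ 2 := by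
    nlinarith [mul_nonneg (sub_nonneg.mpr h) (sq_nonneg L)]
  have hpq : (b + c) * L = 0 ∨ (b - c) * L = 0 := by
    by_contra hc
    push_neg at hc
    obtain ⟨hp, hq⟩ := hc
    have hkey := cosh_add_cosh_lt (abs_pos.mpr hp) (abs_pos.mpr hq)
    rw [Real.cosh_abs, Real.cosh_abs, sq_abs, sq_abs] at hkey
    have hsq : Real.sqrt (((b + c) * L) ^ 2 + ((b - c) * L) ^ 2) ≤ |2 * a * L| := by
      calc Real.sqrt (((b + c) * L) ^ 2 + ((b - c) * L) ^ 2)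
          ≤ Real.sqrt ((2 * a * L) ^ 2) := Real.sqrt_le_sqrt hw2
        _ = |2 * a * L| := Real.sqrt_sq_eq_abs _
    have hle : Real.cosh (Real.sqrt (((b + c) * L) ^ 2 + ((b - c) * L) ^ 2))
        ≤ Real.cosh (2 * a * L) := by
      rw [← Real.cosh_abs (2 * a * L)]
      rw [Real.cosh_le_cosh, abs_of_nonneg (Real.sqrt_nonneg _), abs_abs]
      exact hsq
    linarith
  have hLne : L ≠ 0 := hL.ne'
  have hcancel : ∀ {s t : ℝ}, |s * L| = |t * L| → |s| = |t| := by
    intro s t hst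
    rw [abs_mul, abs_mul] at hst
    exact mul_right_cancel₀ (abs_ne_zero.mpr hLne) hst
  rcases hpq with hp0 | hq0
  · have hbc : b + c = 0 := by
      rcases mul_eq_zero.mp hp0 with h' | h'
      · exact h'
      · exact absurd h' hLne
    have hcb : c = -b := by linarith
    have hcw : Real.cosh (2 * a * L) = Real.cosh ((b - c) * L) := by
      rw [hp0, Real.cosh_zero] at heq2
      linarith
    have habs := hcancel (cosh_abs_eq hcw)
    rw [hcb] at habs
    rw [show b - -b = 2 * b by ring] at habs
    rw [abs_mul, abs_mul] at habs
    have hab : |a| = |b| := mul_left_cancel₀ (by norm_num : |(2:ℝ)| ≠ 0) habs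
    exact ⟨hab, by rw [hcb, abs_neg]⟩
  · have hbc : b - c = 0 := by
      rcases mul_eq_zero.mp hq0 with h' | h'
      · exact h'
      · exact absurd h' hLne
    have hcb : c = b := by linarith
    have hcw : Real.cosh (2 * a * L) = Real.cosh ((b + c) * L) := by
      rw [hq0, Real.cosh_zero] at heq2
      linarith
    have habs := hcancel (cosh_abs_eq hcw)
    rw [hcb] at habs
    rw [show b + b = 2 * b by ring] at habs
    rw [abs_mul, abs_mul] at habs
    have hab : |a| = |b| := mul_left_cancel₀ (by norm_num : |(2:ℝ)| ≠ 0) habs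
    exact ⟨hab, by rw [hcb]⟩

lemma chebT_eq_cosh {γ x : ℝ} (hx : 1 ≤ x) :
    chebT γ x = Real.cosh (γ * Real.log (x + Real.sqrt (x ^ 2 - 1))) := by
  have hs : 0 ≤ Real.sqrt (x ^ 2 - 1) := Real.sqrt_nonneg _
  have hb : 0 < x + Real.sqrt (x ^ 2 - 1) := by linarith
  have hs2 : Real.sqrt (x ^ 2 - 1) ^ 2 = x ^ 2 - 1 := Real.sq_sqrt (by nlinarith)
  have hmul : (x + Real.sqrt (x ^ 2 - 1)) * (x - Real.sqrt (x ^ 2 - 1)) = 1 := by nlinarith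
  have hinv : x - Real.sqrt (x ^ 2 - 1) = (x + Real.sqrt (x ^ 2 - 1))⁻¹ :=
    eq_inv_of_mul_eq_one_left (by linarith [hmul, mul_comm (x + Real.sqrt (x ^ 2 - 1)) (x - Real.sqrt (x ^ 2 - 1))])
  rw [chebT, hinv, Real.rpow_def_of_pos hb, Real.rpow_def_of_pos (inv_pos.mpr hb),
    Real.log_inv, Real.cosh_eq]
  ring_nf

theorem chebT_sq_eq_iff (α β γ x : ℝ) (h : 2 * α ^ 2 ≥ β ^ 2 + γ ^ 2) (hx : 1 ≤ x) :
    (chebT α x) ^ 2 = chebT β x * chebT γ x ↔ x = 1 ∨ (|α| = |β| ∧ |β| = |γ|) := by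
  set L := Real.log (x + Real.sqrt (x ^ 2 - 1)) with hLdef
  rw [chebT_eq_cosh hx, chebT_eq_cosh hx, chebT_eq_cosh (γ := γ) hx]
  rcases eq_or_lt_of_le hx with h1 | h1
  · have hL0 : L = 0 := by
      rw [hLdef, ← h1]
      norm_num
    simp [hL0, ← h1]
  · have hL : 0 < L := Real.log_pos (by nlinarith [Real.sqrt_nonneg (x ^ 2 - 1)])
    constructor
    · intro heq
      exact Or.inr (main_cosh h hL heq)
    · rintro (rfl | ⟨hab, hbc⟩)
      · linarith
      · have e1 : Real.cosh (α * L) = Real.cosh (β * L) := by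
          rw [← Real.cosh_abs (α * L), ← Real.cosh_abs (β * L), abs_mul, abs_mul, hab]
        have e2 : Real.cosh (β * L) = Real.cosh (γ * L) := by
          rw [← Real.cosh_abs (β * L), ← Real.cosh_abs (γ * L), abs_mul, abs_mul, hbc]
        rw [e1, e2]
        ring
end

section
/- Let α, β, γ be real numbers. If (T_α(x))² ≥ T_β(x) · T_γ(x) holds for all real x ≥ 1, then 2α² ≥ β² + γ², where T_δ(x) = ((x + √(x²−1))^δ + (x − √(x²−1))^δ)/2. -/
/-!
Substituting `x = cosh t` turns `T_δ` into `t ↦ cosh (δ t)`, so the hypothesis reads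
`cosh (β t) cosh (γ t) ≤ cosh (α t)²` for all `t`. Squeezing both sides between
`1 + s²/2 ≤ cosh s ≤ exp (s²/2)` gives `1 + (β² + γ²) u / 2 ≤ exp (α² u)` for `u = t² > 0`;
both sides agree at `u = 0`, so comparing derivatives there yields `(β² + γ²) / 2 ≤ α²`.
-/

open Real Filter Topology

lemma chebT_cosh (δ t : ℝ) : chebT δ (cosh t) = cosh (δ * t) := by
  have hsqrt : √(cosh t ^ 2 - 1) = sinh |t| := by
    rw [cosh_sq, add_sub_cancel_right, sqrt_sq_eq_abs, abs_sinh]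
  rw [chebT, hsqrt, ← cosh_abs t, cosh_add_sinh, cosh_sub_sinh, ← exp_mul, ← exp_mul, neg_mul,
    ← cosh_eq, ← cosh_abs, abs_mul, abs_abs, ← abs_mul, cosh_abs, mul_comm]

lemma Real.one_add_sq_div_two_le_cosh (x : ℝ) : 1 + x ^ 2 / 2 ≤ cosh x := by
  have hnonneg : ∀ n : ℕ, 0 ≤ x ^ (2 * n) / (2 * n).factorial := fun n => by
    rw [pow_mul]; positivity
  simpa [Finset.sum_range_succ] using
    sum_le_hasSum (Finset.range 2) (fun n _ => hnonneg n) (hasSum_cosh x)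

lemma HasDerivAt.le_of_forall_add_mul_le {f : ℝ → ℝ} {f' x c : ℝ} (hf : HasDerivAt f f' x)
    (h : ∀ u > 0, f x + c * u ≤ f (x + u)) : c ≤ f' := by
  refine ge_of_tendsto hf.tendsto_slope_zero_right ?_
  filter_upwards [self_mem_nhdsWithin] with u (hu : 0 < u)
  rw [smul_eq_mul, ← div_eq_inv_mul, le_div_iff₀ hu]
  linarith [h u hu]

theorem chebT_sq_ge_converse (α β γ : ℝ)
    (h : ∀ x : ℝ, 1 ≤ x → (chebT α x) ^ 2 ≥ chebT β x * chebT γ x) :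
    2 * α ^ 2 ≥ β ^ 2 + γ ^ 2 := by
  have hcosh (t : ℝ) : cosh (β * t) * cosh (γ * t) ≤ cosh (α * t) ^ 2 := by
    simpa only [chebT_cosh] using h (cosh t) (one_le_cosh t)
  have hexp (u : ℝ) (hu : 0 < u) : 1 + (β ^ 2 + γ ^ 2) / 2 * u ≤ exp (α ^ 2 * u) := by
    obtain ⟨t, rfl⟩ : ∃ t, u = t ^ 2 := ⟨√u, (sq_sqrt hu.le).symm⟩
    calc 1 + (β ^ 2 + γ ^ 2) / 2 * t ^ 2
        ≤ (1 + (β * t) ^ 2 / 2) * (1 + (γ * t) ^ 2 / 2) := by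
          nlinarith [sq_nonneg (β * γ * t ^ 2)]
      _ ≤ cosh (β * t) * cosh (γ * t) :=
          mul_le_mul (one_add_sq_div_two_le_cosh _) (one_add_sq_div_two_le_cosh _)
            (by positivity) (cosh_pos _).le
      _ ≤ cosh (α * t) ^ 2 := hcosh t
      _ ≤ exp ((α * t) ^ 2 / 2) ^ 2 :=
          pow_le_pow_left₀ (cosh_pos _).le (cosh_le_exp_half_sq _) 2
      _ = exp (α ^ 2 * t ^ 2) := by rw [← exp_nat_mul]; ring_nf
  have hderiv : HasDerivAt (fun u => exp (α ^ 2 * u)) (α ^ 2) 0 := by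
    simpa using ((hasDerivAt_id (0 : ℝ)).const_mul (α ^ 2)).exp
  linarith [hderiv.le_of_forall_add_mul_le fun u hu => by simpa using hexp u hu]
end

section
/- For each fixed real x ≥ 1, the function f_x : (0,∞) → ℝ defined by f_x(α) = ln T_{√α}(x) is concave on (0,∞), where T_γ(x) = ((x + √(x²−1))^γ + (x − √(x²−1))^γ)/2. -/
lemma hasDerivAt_tanh (y : ℝ) : HasDerivAt Real.tanh (1 / Real.cosh y ^ 2) y := by
  have h : HasDerivAt (fun z => Real.sinh z / Real.cosh z)
      ((Real.cosh y * Real.cosh y - Real.sinh y * Real.sinh y) / Real.cosh y ^ 2) y :=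
    (Real.hasDerivAt_sinh y).div (Real.hasDerivAt_cosh y) (Real.cosh_pos y).ne'
  have hc : Real.cosh y * Real.cosh y - Real.sinh y * Real.sinh y = 1 := by
    have := Real.cosh_sq y
    nlinarith
  have h2 : HasDerivAt (fun z => Real.sinh z / Real.cosh z) (1 / Real.cosh y ^ 2) y := by
    rwa [hc] at h
  have hfun : Real.tanh = fun z => Real.sinh z / Real.cosh z :=
    funext Real.tanh_eq_sinh_div_cosh
  rw [hfun]
  exact h2

lemma tanh_concave : ConcaveOn ℝ (Set.Ici (0 : ℝ)) Real.tanh := by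
  have hder : deriv Real.tanh = fun y => 1 / Real.cosh y ^ 2 :=
    funext fun y => (hasDerivAt_tanh y).deriv
  refine AntitoneOn.concaveOn_of_deriv (convex_Ici 0) (Differentiable.continuous fun y => (hasDerivAt_tanh y).differentiableAt).continuousOn
    (fun y _ => ((hasDerivAt_tanh y).differentiableAt).differentiableWithinAt) ?_
  rw [hder, interior_Ici]
  intro a ha b hb hab
  have ha0 : (0:ℝ) ≤ a := (Set.mem_Ioi.mp ha).le
  have hsa : 0 ≤ Real.sinh a := by
    rw [← Real.sinh_zero]; exact (Real.sinh_le_sinh).mpr ha0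
  have hsab : Real.sinh a ≤ Real.sinh b := Real.sinh_le_sinh.mpr hab
  have hcc : Real.cosh a ^ 2 ≤ Real.cosh b ^ 2 := by
    rw [Real.cosh_sq, Real.cosh_sq]
    nlinarith
  exact one_div_le_one_div_of_le (by positivity) hcc

/-- Key inequality: for `0 ≤ p ≤ q`, `p * tanh q ≤ q * tanh p`. -/
lemma mul_tanh_le (p q : ℝ) (hp : 0 ≤ p) (hpq : p ≤ q) :
    p * Real.tanh q ≤ q * Real.tanh p := by
  rcases eq_or_lt_of_le (hp.trans hpq) with hq | hq
  · simp [← hq, (le_antisymm hpq (hq ▸ hp) : p = q)]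
  · have hmem0 : (0:ℝ) ∈ Set.Ici (0:ℝ) := Set.self_mem_Ici
    have hmemq : q ∈ Set.Ici (0:ℝ) := le_of_lt hq
    have ha : 0 ≤ p / q := div_nonneg hp hq.le
    have hb : 0 ≤ 1 - p / q := by
      rw [sub_nonneg]; exact (div_le_one hq).mpr hpq
    have hs : p / q + (1 - p / q) = 1 := by ring
    have := tanh_concave.2 hmemq hmem0 ha hb hs
    simp only [smul_eq_mul, mul_zero, add_zero, Real.tanh_zero, mul_zero, add_zero] at this
    have hpq' : p / q * q = p := div_mul_cancel₀ p hq.ne'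
    rw [hpq'] at this
    calc p * Real.tanh q = q * (p / q * Real.tanh q) := by
          field_simp
      _ ≤ q * Real.tanh p := by
          apply mul_le_mul_of_nonneg_left _ hq.le
          linarith

theorem log_chebT_sqrt_concave (x : ℝ) (hx : 1 ≤ x) :
    ConcaveOn ℝ (Set.Ioi (0 : ℝ)) (fun α : ℝ => Real.log (chebT (Real.sqrt α) x)) := by
  set s := Real.sqrt (x ^ 2 - 1) with hs
  have hx2 : (0:ℝ) ≤ x ^ 2 - 1 := by nlinarith
  have hs0 : 0 ≤ s := Real.sqrt_nonneg _
  have hssq : s ^ 2 = x ^ 2 - 1 := Real.sq_sqrt hx2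
  have hu1 : 1 ≤ x + s := by linarith
  have hu0 : 0 < x + s := by linarith
  have hinv : x - s = (x + s)⁻¹ := by
    rw [inv_eq_one_div, eq_div_iff hu0.ne']
    nlinarith
  set t := Real.log (x + s) with ht
  have ht0 : 0 ≤ t := Real.log_nonneg hu1
  -- rewrite chebT as cosh
  have hcheb : ∀ γ : ℝ, chebT γ x = Real.cosh (γ * t) := by
    intro γ
    have h1 : (x + s) ^ γ = Real.exp (γ * t) := by
      rw [Real.rpow_def_of_pos hu0]; ring_nf; rw [ht, mul_comm]
    have h2 : (x - s) ^ γ = Real.exp (-(γ * t)) := by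
      rw [hinv, Real.rpow_def_of_pos (by positivity), Real.log_inv]; ring_nf; rw [ht, mul_comm]
    rw [chebT, ← hs, h1, h2, Real.cosh_eq]
  have hfun : (fun α : ℝ => Real.log (chebT (Real.sqrt α) x)) =
      fun α : ℝ => Real.log (Real.cosh (Real.sqrt α * t)) := by
    funext α; rw [hcheb]
  rw [hfun]
  -- derivative
  have hderiv : ∀ α : ℝ, 0 < α →
      HasDerivAt (fun α : ℝ => Real.log (Real.cosh (Real.sqrt α * t)))
        (Real.sinh (Real.sqrt α * t) * (1 / (2 * Real.sqrt α) * t) /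
          Real.cosh (Real.sqrt α * t)) α := by
    intro α hα
    have h1 : HasDerivAt (fun α : ℝ => Real.sqrt α * t) (1 / (2 * Real.sqrt α) * t) α :=
      (Real.hasDerivAt_sqrt hα.ne').mul_const t
    have h2 : HasDerivAt (fun α : ℝ => Real.cosh (Real.sqrt α * t))
        (Real.sinh (Real.sqrt α * t) * (1 / (2 * Real.sqrt α) * t)) α :=
      (Real.hasDerivAt_cosh _).comp α h1
    exact h2.log (Real.cosh_pos _).ne'
  refine AntitoneOn.concaveOn_of_deriv (convex_Ioi 0) ?_ ?_ ?_
  · refine Continuous.continuousOn ?_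
    exact ((Real.continuous_cosh.comp (Real.continuous_sqrt.mul continuous_const)).log
      fun α => (Real.cosh_pos _).ne')
  · rw [interior_Ioi]
    exact fun α hα => ((hderiv α hα).differentiableAt).differentiableWithinAt
  · rw [interior_Ioi]
    intro a ha b hb hab
    rw [(hderiv a ha).deriv, (hderiv b hb).deriv]
    have hsa : 0 < Real.sqrt a := Real.sqrt_pos.mpr ha
    have hsb : 0 < Real.sqrt b := Real.sqrt_pos.mpr hb
    have hsab : Real.sqrt a ≤ Real.sqrt b := Real.sqrt_le_sqrt hab
    set p := Real.sqrt a * t with hp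
    set q := Real.sqrt b * t with hq
    have hp0 : 0 ≤ p := mul_nonneg hsa.le ht0
    have hpq : p ≤ q := mul_le_mul_of_nonneg_right hsab ht0
    have key := mul_tanh_le p q hp0 hpq
    rw [Real.tanh_eq_sinh_div_cosh, Real.tanh_eq_sinh_div_cosh] at key
    have hca : 0 < Real.cosh p := Real.cosh_pos p
    have hcb : 0 < Real.cosh q := Real.cosh_pos q
    -- goal: sinh q * (1/(2√b)*t)/cosh q ≤ sinh p * (1/(2√a)*t)/cosh p
    rw [div_le_div_iff₀ hcb hca]
    have hsp : 0 ≤ Real.sinh p := by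
      rw [← Real.sinh_zero]; exact Real.sinh_le_sinh.mpr hp0
    have key2 : p * Real.sinh q * Real.cosh p ≤ q * Real.sinh p * Real.cosh q := by
      rw [← mul_div_assoc, ← mul_div_assoc, div_le_div_iff₀ hcb hca] at key
      exact key
    rcases eq_or_lt_of_le ht0 with ht0' | ht0'
    · simp [hp, hq, ← ht0']
    · have h2a : (0:ℝ) < 2 * Real.sqrt a := by positivity
      have h2b : (0:ℝ) < 2 * Real.sqrt b := by positivity
      rw [hp, hq] at key2
      have expand : Real.sinh (Real.sqrt b * t) * (1 / (2 * Real.sqrt b) * t) * Real.cosh (Real.sqrt a * t)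
          = (t / (2 * Real.sqrt a * Real.sqrt b)) * (Real.sqrt a * Real.sinh (Real.sqrt b * t) * Real.cosh (Real.sqrt a * t)) := by
        field_simp
      have expand2 : Real.sinh (Real.sqrt a * t) * (1 / (2 * Real.sqrt a) * t) * Real.cosh (Real.sqrt b * t)
          = (t / (2 * Real.sqrt a * Real.sqrt b)) * (Real.sqrt b * Real.sinh (Real.sqrt a * t) * Real.cosh (Real.sqrt b * t)) := by
        field_simp
      rw [expand, expand2]
      apply mul_le_mul_of_nonneg_left _ (by positivity)
      nlinarith [key2]
end

section
/- Let n be a positive integer, let t₁, …, tₙ be nonnegative real numbers with t₁ + ⋯ + tₙ = 1, and let α, α₁, …, αₙ be real numbers with α² ≥ Σᵢ tᵢ αᵢ². Then for all real x ≥ 1, ∏ᵢ (T_{αᵢ}(x))^{tᵢ} ≤ T_α(x), where T_γ(x) = ((x + √(x²−1))^γ + (x − √(x²−1))^γ)/2. -/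
open Real Set

lemma sinh_le_mul_cosh {x : ℝ} (hx : 0 ≤ x) : Real.sinh x ≤ x * Real.cosh x := by
  have h : MonotoneOn (fun x : ℝ => x * Real.cosh x - Real.sinh x) (Ici 0) := by
    apply monotoneOn_of_deriv_nonneg (convex_Ici 0)
    · exact (continuous_id.mul Real.continuous_cosh).sub Real.continuous_sinh |>.continuousOn
    · intro y hy
      exact (((hasDerivAt_id y).mul (Real.hasDerivAt_cosh y)).sub
        (Real.hasDerivAt_sinh y)).differentiableAt.differentiableWithinAt
    · intro y hy
      rw [interior_Ici] at hy
      have : HasDerivAt (fun x : ℝ => x * Real.cosh x - Real.sinh x)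
          (1 * Real.cosh y + y * Real.sinh y - Real.cosh y) y :=
        ((hasDerivAt_id y).mul (Real.hasDerivAt_cosh y)).sub (Real.hasDerivAt_sinh y)
      rw [this.deriv]
      have hy2 : (0:ℝ) < y := hy
      have hs : 0 ≤ Real.sinh y := Real.sinh_nonneg_iff.mpr hy2.le
      nlinarith [mul_nonneg hy2.le hs]
  have := h (self_mem_Ici (a := (0:ℝ))) hx hx
  simp at this
  linarith

lemma sinh_ratio_mono : MonotoneOn (fun x : ℝ => Real.sinh x / x) (Ioi 0) := by
  apply monotoneOn_of_deriv_nonneg (convex_Ioi 0)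
  · exact ContinuousOn.div Real.continuous_sinh.continuousOn continuousOn_id
      (fun x hx => ne_of_gt hx)
  · intro y hy
    rw [interior_Ioi] at hy
    exact ((Real.hasDerivAt_sinh y).div (hasDerivAt_id y)
      (ne_of_gt hy)).differentiableAt.differentiableWithinAt
  · intro y hy
    rw [interior_Ioi] at hy
    have h : HasDerivAt (fun x : ℝ => Real.sinh x / x)
        ((Real.cosh y * y - Real.sinh y * 1) / y ^ 2) y :=
      (Real.hasDerivAt_sinh y).div (hasDerivAt_id y) (ne_of_gt hy)
    rw [h.deriv]
    have := sinh_le_mul_cosh hy.le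
    apply div_nonneg _ (sq_nonneg y); nlinarith

lemma mul_sinh_le {A B : ℝ} (ha : 0 ≤ A) (hab : A ≤ B) : B * Real.sinh A ≤ A * Real.sinh B := by
  rcases eq_or_lt_of_le ha with h | h
  · simp [← h]
  · have hb : 0 < B := lt_of_lt_of_le h hab
    have := sinh_ratio_mono (mem_Ioi.mpr h) (mem_Ioi.mpr hb) hab
    rw [div_le_div_iff₀ h hb] at this
    linarith

noncomputable def hfun (s : ℝ) : ℝ := Real.log (Real.cosh (Real.sqrt s))

noncomputable def Dfun (s : ℝ) : ℝ :=
  Real.sinh (Real.sqrt s) / (Real.sqrt s * (2 * Real.cosh (Real.sqrt s)))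

lemma hasDerivAt_hfun {s : ℝ} (hs : 0 < s) : HasDerivAt hfun (Dfun s) s := by
  have h1 := Real.hasDerivAt_sqrt (ne_of_gt hs)
  have h2 := (Real.hasDerivAt_cosh (Real.sqrt s)).comp s h1
  have h3 := (Real.hasDerivAt_log (Real.cosh_pos (x := Real.sqrt s)).ne').comp s h2
  refine h3.congr_deriv ?_
  have hsq : Real.sqrt s ≠ 0 := by positivity
  have hc : Real.cosh (Real.sqrt s) ≠ 0 := (Real.cosh_pos _).ne'
  unfold Dfun
  field_simp

lemma Dfun_anti : AntitoneOn Dfun (Ioi 0) := by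
  intro s hs r hr hsr
  have hs0 : (0:ℝ) < s := hs
  have hv : 0 < Real.sqrt s := Real.sqrt_pos.mpr hs0
  have hw : 0 < Real.sqrt r := Real.sqrt_pos.mpr (lt_of_lt_of_le hs0 hsr)
  have hvw : Real.sqrt s ≤ Real.sqrt r := Real.sqrt_le_sqrt hsr
  set v := Real.sqrt s
  set w := Real.sqrt r
  unfold Dfun
  rw [div_le_div_iff₀ (by positivity) (by positivity)]
  have key := mul_sinh_le (A := w - v) (B := w + v) (by linarith) (by linarith)
  have e1 : Real.sinh (w + v) = Real.sinh w * Real.cosh v + Real.cosh w * Real.sinh v :=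
    Real.sinh_add w v
  have e2 : Real.sinh (w - v) = Real.sinh w * Real.cosh v - Real.cosh w * Real.sinh v :=
    Real.sinh_sub w v
  rw [e1, e2] at key
  nlinarith [key]

lemma hfun_concave : ConcaveOn ℝ (Ici 0) hfun := by
  have hanti : AntitoneOn (deriv hfun) (interior (Ici (0:ℝ))) := by
    rw [interior_Ici]
    intro s hs r hr hsr
    rw [(hasDerivAt_hfun hs).deriv, (hasDerivAt_hfun hr).deriv]
    exact Dfun_anti hs hr hsr
  refine hanti.concaveOn_of_deriv (convex_Ici 0) ?_ ?_
  · exact ContinuousOn.log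
      ((Real.continuous_cosh.comp Real.continuous_sqrt).continuousOn)
      (fun s _ => (Real.cosh_pos _).ne')
  · rw [interior_Ici]
    exact fun s hs => (hasDerivAt_hfun hs).differentiableAt.differentiableWithinAt

lemma hfun_mono : MonotoneOn hfun (Ici 0) := by
  intro s hs r hr hsr
  unfold hfun
  apply Real.log_le_log (Real.cosh_pos _)
  rw [Real.cosh_le_cosh]
  rw [abs_of_nonneg (Real.sqrt_nonneg _), abs_of_nonneg (Real.sqrt_nonneg _)]
  exact Real.sqrt_le_sqrt hsr

lemma cosh_jensen (n : ℕ) (t : Fin n → ℝ) (ht : ∀ i, 0 ≤ t i)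
    (hsum : ∑ i, t i = 1) (α : ℝ) (a : Fin n → ℝ)
    (hα : ∑ i, t i * (a i) ^ 2 ≤ α ^ 2) (u : ℝ) (hu : 0 ≤ u) :
    ∏ i, Real.cosh (a i * u) ^ (t i) ≤ Real.cosh (α * u) := by
  have heq : ∀ i, Real.cosh (a i * u) ^ (t i)
      = Real.exp (t i * hfun ((a i) ^ 2 * u ^ 2)) := by
    intro i
    rw [Real.rpow_def_of_pos (Real.cosh_pos _), mul_comm]
    congr 2
    unfold hfun
    rw [show (a i) ^ 2 * u ^ 2 = (a i * u) ^ 2 by ring, Real.sqrt_sq_eq_abs, Real.cosh_abs]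
  have key : ∑ i, t i * hfun ((a i) ^ 2 * u ^ 2) ≤ hfun (α ^ 2 * u ^ 2) := by
    have j := hfun_concave.le_map_sum (t := Finset.univ) (w := t)
      (p := fun i => (a i) ^ 2 * u ^ 2) (fun i _ => ht i) hsum
      (fun i _ => mem_Ici.mpr (by positivity))
    simp only [smul_eq_mul] at j
    refine le_trans j (hfun_mono ?_ ?_ ?_)
    · exact mem_Ici.mpr (Finset.sum_nonneg fun i _ => mul_nonneg (ht i) (by positivity))
    · exact mem_Ici.mpr (by positivity)
    · have e : ∑ x, t x * (a x ^ 2 * u ^ 2) = (∑ x, t x * a x ^ 2) * u ^ 2 := by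
        rw [Finset.sum_mul]; exact Finset.sum_congr rfl fun i _ => by ring
      rw [e]
      exact mul_le_mul_of_nonneg_right hα (sq_nonneg u)
  calc ∏ i, Real.cosh (a i * u) ^ (t i)
      = Real.exp (∑ i, t i * hfun ((a i) ^ 2 * u ^ 2)) := by
        rw [Real.exp_sum]; exact Finset.prod_congr rfl fun i _ => heq i
    _ ≤ Real.exp (hfun (α ^ 2 * u ^ 2)) := Real.exp_le_exp.mpr key
    _ = Real.cosh (α * u) := by
        unfold hfun
        rw [show α ^ 2 * u ^ 2 = (α * u) ^ 2 by ring, Real.sqrt_sq_eq_abs, Real.cosh_abs,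
          Real.exp_log (Real.cosh_pos _)]

lemma chebT_eq {x : ℝ} (hx : 1 ≤ x) (γ : ℝ) :
    chebT γ x = Real.cosh (γ * Real.log (x + Real.sqrt (x ^ 2 - 1))) := by
  have h1 : (0:ℝ) ≤ x ^ 2 - 1 := by nlinarith
  have hr0 : 0 ≤ Real.sqrt (x ^ 2 - 1) := Real.sqrt_nonneg _
  have hrsq : Real.sqrt (x ^ 2 - 1) ^ 2 = x ^ 2 - 1 := Real.sq_sqrt h1
  set r := Real.sqrt (x ^ 2 - 1) with hrdef
  have hy0 : 0 < x + r := by linarith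
  have hinv : x - r = (x + r)⁻¹ := by
    apply eq_inv_of_mul_eq_one_left
    nlinarith
  unfold chebT
  rw [hinv, Real.inv_rpow hy0.le, ← Real.rpow_neg hy0.le,
    Real.rpow_def_of_pos hy0, Real.rpow_def_of_pos hy0, Real.cosh_eq]
  ring_nf

theorem chebT_geom_mean_le (n : ℕ) (hn : 0 < n) (t : Fin n → ℝ) (ht : ∀ i, 0 ≤ t i)
    (hsum : ∑ i, t i = 1) (α : ℝ) (a : Fin n → ℝ)
    (hα : α ^ 2 ≥ ∑ i, t i * (a i) ^ 2) :
    ∀ x : ℝ, 1 ≤ x → ∏ i, (chebT (a i) x) ^ (t i) ≤ chebT α x := by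
  intro x hx
  set u := Real.log (x + Real.sqrt (x ^ 2 - 1)) with hu
  have hu0 : 0 ≤ u :=
    Real.log_nonneg (by have := Real.sqrt_nonneg (x ^ 2 - 1); linarith)
  rw [chebT_eq hx α]
  calc ∏ i, chebT (a i) x ^ t i = ∏ i, Real.cosh (a i * u) ^ t i :=
        Finset.prod_congr rfl fun i _ => by rw [chebT_eq hx]
    _ ≤ _ := cosh_jensen n t ht hsum α a hα u hu0
end

section
/- Let n be a positive integer, let t₁, …, tₙ be nonnegative real numbers with t₁ + ⋯ + tₙ = 1, let α, α₁, …, αₙ be real numbers with α² ≥ Σᵢ tᵢ αᵢ², and let x ≥ 1. Then ∏ᵢ (T_{αᵢ}(x))^{tᵢ} = T_α(x) if and only if x = 1 or |α| = |αᵢ| for every index i with tᵢ ≠ 0, where T_γ(x) = ((x + √(x²−1))^γ + (x − √(x²−1))^γ)/2. -/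
private lemma gmono {c : ℝ} (hc : 0 < c) {s s' : ℝ} (hs : 0 ≤ s) (h : s < s') :
    Real.log (Real.cosh (c * Real.sqrt s)) < Real.log (Real.cosh (c * Real.sqrt s')) := by
  have h1 : Real.sqrt s < Real.sqrt s' := Real.sqrt_lt_sqrt hs h
  have h2 : Real.cosh (c * Real.sqrt s) < Real.cosh (c * Real.sqrt s') := by
    rw [Real.cosh_lt_cosh, abs_of_nonneg (by positivity), abs_of_nonneg (by positivity)]
    exact (mul_lt_mul_iff_right₀ hc).2 h1
  exact Real.log_lt_log (Real.cosh_pos _) h2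

private lemma gconc {c : ℝ} (hc : 0 < c) :
    StrictConcaveOn ℝ (Set.Ici 0) (fun s => Real.log (Real.cosh (c * Real.sqrt s))) := by
  have hcont : ContinuousOn (fun s => Real.log (Real.cosh (c * Real.sqrt s))) (Set.Ici 0) := by
    apply ContinuousOn.log
    · fun_prop
    · intro s _; exact (Real.cosh_pos _).ne'
  apply strictConcaveOn_of_deriv2_neg (convex_Ici 0) hcont
  intro s hs
  rw [interior_Ici] at hs
  replace hs : (0:ℝ) < s := hs
  set G : ℝ → ℝ := fun u =>
    Real.sinh (c * Real.sqrt u) * (c * (1 / (2 * Real.sqrt u))) / Real.cosh (c * Real.sqrt u)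
    with hGdef
  have hderiv : ∀ u : ℝ, 0 < u →
      HasDerivAt (fun s => Real.log (Real.cosh (c * Real.sqrt s))) (G u) u := by
    intro u hu
    have h1 : HasDerivAt Real.sqrt (1 / (2 * Real.sqrt u)) u := Real.hasDerivAt_sqrt hu.ne'
    have h2 : HasDerivAt (fun s => c * Real.sqrt s) (c * (1 / (2 * Real.sqrt u))) u :=
      h1.const_mul c
    exact h2.cosh.log (Real.cosh_pos _).ne'
  have hEqOn : Set.EqOn (deriv (fun s => Real.log (Real.cosh (c * Real.sqrt s)))) G
      (Set.Ioi 0) := fun u hu => (hderiv u hu).deriv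
  have hev : deriv (fun s => Real.log (Real.cosh (c * Real.sqrt s))) =ᶠ[nhds s] G :=
    hEqOn.eventuallyEq_of_mem (Ioi_mem_nhds hs)
  have h2it : deriv^[2] (fun s => Real.log (Real.cosh (c * Real.sqrt s))) s = deriv G s := by
    simp only [Function.iterate_succ, Function.iterate_zero, Function.comp_apply, id]
    exact hev.deriv_eq
  rw [h2it]
  -- compute deriv G s
  have h1 : HasDerivAt Real.sqrt (1 / (2 * Real.sqrt s)) s := Real.hasDerivAt_sqrt hs.ne'
  have h2 : HasDerivAt (fun u => c * Real.sqrt u) (c * (1 / (2 * Real.sqrt s))) s :=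
    h1.const_mul c
  have h3 := h2.sinh
  have h4 := h2.cosh
  have h5 : HasDerivAt (fun u => 2 * Real.sqrt u) (2 * (1 / (2 * Real.sqrt s))) s :=
    h1.const_mul 2
  have hr : 0 < Real.sqrt s := Real.sqrt_pos.2 hs
  have h6 : HasDerivAt (fun u => 1 / (2 * Real.sqrt u))
      (-(2 * (1 / (2 * Real.sqrt s))) / (2 * Real.sqrt s) ^ 2) s := by
    have e : (fun u => 1 / (2 * Real.sqrt u)) = (fun u => 2 * Real.sqrt u)⁻¹ := by
      ext u; simp [one_div]
    rw [e]; exact h5.inv (by positivity)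
  have h7 := h6.const_mul c
  have h8 := h3.mul h7
  have h9 := h8.div h4 (Real.cosh_pos _).ne'
  have h9' : HasDerivAt G _ s := h9
  rw [h9'.deriv, Pi.mul_apply]
  -- now pure inequality
  set r := Real.sqrt s with hrdef
  set S := Real.sinh (c * r) with hSdef
  set C := Real.cosh (c * r) with hCdef
  have hC1 : 1 ≤ C := Real.one_le_cosh _
  have hSw : c * r < S := by
    rw [hSdef]; exact Real.self_lt_sinh_iff.2 (by positivity)
  have hid : C ^ 2 - S ^ 2 = 1 := Real.cosh_sq_sub_sinh_sq _
  have hC0 : (0:ℝ) < C := by linarith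
  apply div_neg_of_neg_of_pos _ (by positivity)
  have hnum : (C * (c * (1 / (2 * r))) * (c * (1 / (2 * r))) +
        S * (c * (-(2 * (1 / (2 * r))) / (2 * r) ^ 2))) * C -
        S * (c * (1 / (2 * r))) * (S * (c * (1 / (2 * r))))
      = (c * r * (C ^ 2 - S ^ 2) - S * C) * c / (4 * r ^ 3) := by
    field_simp
    ring
  rw [hnum, hid, mul_one]
  apply div_neg_of_neg_of_pos _ (by positivity)
  have hS0 : 0 < S := lt_trans (by positivity) hSw
  have : c * r < S * C := by nlinarith
  nlinarith

private lemma main_sum_iff {n : ℕ} {t : Fin n → ℝ} (ht : ∀ i, 0 ≤ t i) (hsum : ∑ i, t i = 1)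
    {c : ℝ} (hc : 0 < c) {α : ℝ} {a : Fin n → ℝ} (hα : ∑ i, t i * (a i) ^ 2 ≤ α ^ 2) :
    (∑ i, t i * Real.log (Real.cosh (c * Real.sqrt ((a i) ^ 2)))
       = Real.log (Real.cosh (c * Real.sqrt (α ^ 2)))) ↔ ∀ i, t i ≠ 0 → α ^ 2 = (a i) ^ 2 := by
  classical
  set g : ℝ → ℝ := fun s => Real.log (Real.cosh (c * Real.sqrt s)) with hgdef
  constructor
  · intro h
    set F : Finset (Fin n) := Finset.univ.filter (fun i => t i ≠ 0) with hF
    have hFt : ∀ i ∈ F, 0 < t i := by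
      intro i hi
      rcases (ht i).lt_or_eq with h' | h'
      · exact h'
      · exact absurd h'.symm (Finset.mem_filter.1 hi).2
    have hFsum : ∑ i ∈ F, t i = 1 := by rw [hF, Finset.sum_filter_ne_zero]; exact hsum
    have hsame : ∀ f : Fin n → ℝ, ∑ i ∈ F, t i * f i = ∑ i, t i * f i := by
      intro f
      rw [hF]
      apply Finset.sum_filter_of_ne
      intro i _ hne h0
      exact hne (by rw [h0, zero_mul])
    have hS_le : ∑ i ∈ F, t i * (a i) ^ 2 ≤ α ^ 2 := by rw [hsame]; exact hα
    have hgsum : ∑ i ∈ F, t i * g ((a i) ^ 2) = g (α ^ 2) := by rw [hsame]; exact h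
    have hmem : ∀ i ∈ F, (a i) ^ 2 ∈ Set.Ici (0:ℝ) := fun i _ => Set.mem_Ici.2 (sq_nonneg _)
    obtain ⟨j, hj⟩ : ∃ j, j ∈ F := by
      by_contra hno
      push_neg at hno
      have h0 : ∑ i ∈ F, t i = 0 := Finset.sum_eq_zero fun i hi => absurd hi (hno i)
      rw [hFsum] at h0; norm_num at h0
    have hS0 : (0:ℝ) ≤ ∑ i ∈ F, t i * (a i) ^ 2 :=
      Finset.sum_nonneg fun i _ => mul_nonneg (ht i) (sq_nonneg _)
    have hgmono : g (∑ i ∈ F, t i * (a i) ^ 2) ≤ g (α ^ 2) := by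
      rcases hS_le.lt_or_eq with h' | h'
      · exact (gmono hc hS0 h').le
      · rw [h']
    have hle : g (∑ i ∈ F, t i * (a i) ^ 2) ≤ ∑ i ∈ F, t i * g ((a i) ^ 2) := by
      rw [hgsum]; exact hgmono
    have hall : ∀ ⦃i⦄, i ∈ F → ∀ ⦃k⦄, k ∈ F → (a i) ^ 2 = (a k) ^ 2 := by
      have := (gconc hc).eq_of_map_sum_eq hFt hFsum hmem (by simpa [smul_eq_mul] using hle)
      exact this
    have hScalc : ∑ i ∈ F, t i * (a i) ^ 2 = (a j) ^ 2 := by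
      rw [Finset.sum_congr rfl fun i hi => by rw [hall hi hj], ← Finset.sum_mul, hFsum, one_mul]
    have hgsum2 : ∑ i ∈ F, t i * g ((a i) ^ 2) = g ((a j) ^ 2) := by
      rw [Finset.sum_congr rfl fun i hi => by rw [hall hi hj], ← Finset.sum_mul, hFsum, one_mul]
    have hgj : g ((a j) ^ 2) = g (α ^ 2) := by rw [← hgsum2, hgsum]
    have hSeq : (a j) ^ 2 = α ^ 2 := by
      by_contra hne
      have hlt : (a j) ^ 2 < α ^ 2 := lt_of_le_of_ne (by rw [← hScalc]; exact hS_le) hne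
      exact absurd hgj (ne_of_lt (gmono hc (sq_nonneg _) hlt))
    intro i hi
    have hiF : i ∈ F := Finset.mem_filter.2 ⟨Finset.mem_univ i, hi⟩
    rw [← hSeq]
    exact (hall hiF hj).symm
  · intro h
    have hterm : ∀ i, t i * g ((a i) ^ 2) = t i * g (α ^ 2) := by
      intro i
      by_cases hi : t i = 0
      · rw [hi, zero_mul, zero_mul]
      · rw [h i hi]
    rw [Finset.sum_congr rfl fun i _ => hterm i, ← Finset.sum_mul, hsum, one_mul]

theorem chebT_geom_mean_eq_iff (n : ℕ) (hn : 0 < n) (t : Fin n → ℝ) (ht : ∀ i, 0 ≤ t i)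
    (hsum : ∑ i, t i = 1) (α : ℝ) (a : Fin n → ℝ)
    (hα : α ^ 2 ≥ ∑ i, t i * (a i) ^ 2) (x : ℝ) (hx : 1 ≤ x) :
    ∏ i, (chebT (a i) x) ^ (t i) = chebT α x ↔
      x = 1 ∨ ∀ i, t i ≠ 0 → |α| = |a i| := by
  rcases hx.lt_or_eq with hlt | hxe
  · -- 1 < x
    have hx2 : (0:ℝ) < x ^ 2 - 1 := by nlinarith
    have hsq : 0 < Real.sqrt (x ^ 2 - 1) := Real.sqrt_pos.2 hx2
    have hss : Real.sqrt (x ^ 2 - 1) ^ 2 = x ^ 2 - 1 := Real.sq_sqrt hx2.le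
    set y := x + Real.sqrt (x ^ 2 - 1) with hydef
    have hy1 : 1 < y := by rw [hydef]; linarith
    have hy0 : 0 < y := by linarith
    have hc : 0 < Real.log y := Real.log_pos hy1
    have hyinv : x - Real.sqrt (x ^ 2 - 1) = y⁻¹ := by
      have hmul : y * (x - Real.sqrt (x ^ 2 - 1)) = 1 := by rw [hydef]; nlinarith [hss]
      exact (inv_eq_of_mul_eq_one_right hmul).symm
    have hcheb : ∀ γ : ℝ, chebT γ x = Real.cosh (γ * Real.log y) := by
      intro γ
      unfold chebT
      rw [hyinv, ← hydef, Real.rpow_def_of_pos hy0, Real.rpow_def_of_pos (inv_pos.2 hy0),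
        Real.log_inv, Real.cosh_eq]
      ring_nf
    have hpos : ∀ γ : ℝ, 0 < chebT γ x := fun γ => by rw [hcheb γ]; exact Real.cosh_pos _
    have hlogT : ∀ γ : ℝ, Real.log (chebT γ x)
        = Real.log (Real.cosh (Real.log y * Real.sqrt (γ ^ 2))) := by
      intro γ
      have habs : Real.log y * Real.sqrt (γ ^ 2) = |γ * Real.log y| := by
        rw [Real.sqrt_sq_eq_abs, abs_mul, abs_of_pos hc]; ring
      rw [hcheb γ, habs, Real.cosh_abs]
    have hL : 0 < ∏ i, (chebT (a i) x) ^ (t i) :=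
      Finset.prod_pos fun i _ => Real.rpow_pos_of_pos (hpos _) _
    have hlog_prod : Real.log (∏ i, (chebT (a i) x) ^ (t i))
        = ∑ i, t i * Real.log (Real.cosh (Real.log y * Real.sqrt ((a i) ^ 2))) := by
      rw [Real.log_prod fun i _ => (Real.rpow_pos_of_pos (hpos _) _).ne']
      exact Finset.sum_congr rfl fun i _ => by rw [Real.log_rpow (hpos _), hlogT]
    have key : (∏ i, (chebT (a i) x) ^ (t i) = chebT α x) ↔
        (∑ i, t i * Real.log (Real.cosh (Real.log y * Real.sqrt ((a i) ^ 2)))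
          = Real.log (Real.cosh (Real.log y * Real.sqrt (α ^ 2)))) := by
      constructor
      · intro hEq
        rw [← hlog_prod, ← hlogT α, hEq]
      · intro hEq
        apply Real.log_injOn_pos (Set.mem_Ioi.2 hL) (Set.mem_Ioi.2 (hpos α))
        rw [hlog_prod, hlogT α, hEq]
    rw [key, main_sum_iff ht hsum hc hα]
    constructor
    · intro h
      exact Or.inr fun i hi => (sq_eq_sq_iff_abs_eq_abs _ _).1 (h i hi)
    · rintro (h | h)
      · exact absurd h (by linarith)
      · exact fun i hi => (sq_eq_sq_iff_abs_eq_abs _ _).2 (h i hi)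
  · -- x = 1
    subst hxe
    have h1 : ∀ γ : ℝ, chebT γ 1 = 1 := by
      intro γ
      unfold chebT
      norm_num [Real.one_rpow]
    simp only [h1, Real.one_rpow, Finset.prod_const_one, eq_self_iff_true]
    exact iff_of_true trivial (Or.inl trivial)
end

section
/- Let n be a positive integer, let t₁, …, tₙ be nonnegative real numbers with t₁ + ⋯ + tₙ = 1, and let α, α₁, …, αₙ be real numbers. If ∏ᵢ (T_{αᵢ}(x))^{tᵢ} ≤ T_α(x) holds for all real x ≥ 1, then α² ≥ Σᵢ tᵢ αᵢ², where T_γ(x) = ((x + √(x²−1))^γ + (x − √(x²−1))^γ)/2. -/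
lemma chebT_cosh_s7 (γ u : ℝ) (hu : 0 ≤ u) : chebT γ (Real.cosh u) = Real.cosh (γ * u) := by
  have hs : Real.sqrt (Real.cosh u ^ 2 - 1) = Real.sinh u := by
    rw [Real.cosh_sq']
    simpa using Real.sqrt_sq (Real.sinh_nonneg_iff.2 hu)
  have h1 : Real.cosh u + Real.sinh u = Real.exp u := Real.cosh_add_sinh u
  have h2 : Real.cosh u - Real.sinh u = Real.exp (-u) := Real.cosh_sub_sinh u
  have e1 : Real.exp u ^ γ = Real.exp (γ * u) := by
    rw [Real.rpow_def_of_pos (Real.exp_pos u), Real.log_exp, mul_comm]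
  have e2 : Real.exp (-u) ^ γ = Real.exp (-(γ * u)) := by
    rw [Real.rpow_def_of_pos (Real.exp_pos (-u)), Real.log_exp]
    ring_nf
  rw [chebT, hs, h1, h2, e1, e2, Real.cosh_eq]

lemma one_add_half_sq_le_cosh (y : ℝ) : 1 + y ^ 2 / 2 ≤ Real.cosh y := by
  -- reduce to nonnegative y
  rcases le_total 0 y with hy | hy
  · have hz : 0 ≤ y / 2 := by linarith
    have hsinh : y / 2 ≤ Real.sinh (y / 2) := Real.self_le_sinh_iff.2 hz
    have hsnn : 0 ≤ Real.sinh (y / 2) := Real.sinh_nonneg_iff.2 hz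
    have hcosh : Real.cosh y = Real.cosh (y / 2) ^ 2 + Real.sinh (y / 2) ^ 2 := by
      have := Real.cosh_two_mul (y / 2)
      rwa [show 2 * (y / 2) = y by ring] at this
    have hcs : Real.cosh (y / 2) ^ 2 = 1 + Real.sinh (y / 2) ^ 2 := Real.cosh_sq' _
    nlinarith [sq_nonneg (Real.sinh (y / 2))]
  · have hz : 0 ≤ -y / 2 := by linarith
    have hsinh : -y / 2 ≤ Real.sinh (-y / 2) := Real.self_le_sinh_iff.2 hz
    have hsnn : 0 ≤ Real.sinh (-y / 2) := Real.sinh_nonneg_iff.2 hz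
    have hcosh : Real.cosh (-y) = Real.cosh (-y / 2) ^ 2 + Real.sinh (-y / 2) ^ 2 := by
      have := Real.cosh_two_mul (-y / 2)
      rwa [show 2 * (-y / 2) = -y by ring] at this
    have hcs : Real.cosh (-y / 2) ^ 2 = 1 + Real.sinh (-y / 2) ^ 2 := Real.cosh_sq' _
    rw [← Real.cosh_neg]
    nlinarith [sq_nonneg (Real.sinh (-y / 2))]

lemma sq_half_sub_le_log_cosh (y : ℝ) : y ^ 2 / 2 - y ^ 4 / 4 ≤ Real.log (Real.cosh y) := by
  have h1 : 1 + y ^ 2 / 2 ≤ Real.cosh y := one_add_half_sq_le_cosh y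
  have hpos : (0 : ℝ) < 1 + y ^ 2 / 2 := by nlinarith [sq_nonneg y]
  have h2 : Real.log (1 + y ^ 2 / 2) ≤ Real.log (Real.cosh y) :=
    Real.log_le_log hpos h1
  have h3 : 1 - (1 + y ^ 2 / 2)⁻¹ ≤ Real.log (1 + y ^ 2 / 2) :=
    Real.one_sub_inv_le_log_of_pos hpos
  have h4 : y ^ 2 / 2 - y ^ 4 / 4 ≤ 1 - (1 + y ^ 2 / 2)⁻¹ := by
    have hz : (1 + y ^ 2 / 2) * (1 + y ^ 2 / 2)⁻¹ = 1 := mul_inv_cancel₀ hpos.ne'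
    have hznn : 0 ≤ (1 + y ^ 2 / 2)⁻¹ := inv_nonneg.2 hpos.le
    nlinarith [sq_nonneg y, sq_nonneg (y ^ 2), mul_nonneg hznn (sq_nonneg y)]
  linarith

lemma log_cosh_le_sq_half (y : ℝ) : Real.log (Real.cosh y) ≤ y ^ 2 / 2 := by
  have h1 : Real.cosh y ≤ Real.exp (y ^ 2 / 2) := Real.cosh_le_exp_half_sq y
  have := Real.log_le_log (Real.cosh_pos (x := y)) h1
  rwa [Real.log_exp] at this

theorem chebT_geom_mean_converse (n : ℕ) (hn : 0 < n) (t : Fin n → ℝ) (ht : ∀ i, 0 ≤ t i)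
    (hsum : ∑ i, t i = 1) (α : ℝ) (a : Fin n → ℝ)
    (h : ∀ x : ℝ, 1 ≤ x → ∏ i, (chebT (a i) x) ^ (t i) ≤ chebT α x) :
    α ^ 2 ≥ ∑ i, t i * (a i) ^ 2 := by
  -- key inequality for each u > 0
  have key : ∀ u : ℝ, 0 < u →
      ∑ i, t i * (a i) ^ 2 ≤ α ^ 2 + u ^ 2 / 2 * ∑ i, t i * (a i) ^ 4 := by
    intro u hu
    have hx : (1 : ℝ) ≤ Real.cosh u := Real.one_le_cosh u
    have hmain := h (Real.cosh u) hx
    have hprod : ∏ i, (chebT (a i) (Real.cosh u)) ^ (t i)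
        = ∏ i, (Real.cosh (a i * u)) ^ (t i) := by
      refine Finset.prod_congr rfl fun i _ => ?_
      rw [chebT_cosh_s7 (a i) u hu.le]
    rw [hprod, chebT_cosh_s7 α u hu.le] at hmain
    -- take logs
    have hlog : ∑ i, t i * Real.log (Real.cosh (a i * u)) ≤ Real.log (Real.cosh (α * u)) := by
      have hne : ∀ i ∈ Finset.univ, (Real.cosh (a i * u)) ^ (t i) ≠ 0 :=
        fun i _ => (Real.rpow_pos_of_pos (Real.cosh_pos _) _).ne'
      have := Real.log_le_log (Finset.prod_pos fun i _ =>
        Real.rpow_pos_of_pos (Real.cosh_pos _) _) hmain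
      rw [Real.log_prod hne] at this
      calc ∑ i, t i * Real.log (Real.cosh (a i * u))
          = ∑ i, Real.log ((Real.cosh (a i * u)) ^ (t i)) := by
            refine Finset.sum_congr rfl fun i _ => ?_
            rw [Real.log_rpow (Real.cosh_pos _)]
        _ ≤ Real.log (Real.cosh (α * u)) := this
    have hub : Real.log (Real.cosh (α * u)) ≤ (α * u) ^ 2 / 2 := log_cosh_le_sq_half _
    have hlb : ∑ i, t i * ((a i * u) ^ 2 / 2 - (a i * u) ^ 4 / 4)
        ≤ ∑ i, t i * Real.log (Real.cosh (a i * u)) := by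
      refine Finset.sum_le_sum fun i _ => ?_
      exact mul_le_mul_of_nonneg_left (sq_half_sub_le_log_cosh _) (ht i)
    have hineq : ∑ i, t i * ((a i * u) ^ 2 / 2 - (a i * u) ^ 4 / 4) ≤ (α * u) ^ 2 / 2 := by
      linarith
    -- rewrite sums
    have hre : ∑ i, t i * ((a i * u) ^ 2 / 2 - (a i * u) ^ 4 / 4)
        = u ^ 2 / 2 * ∑ i, t i * (a i) ^ 2 - u ^ 4 / 4 * ∑ i, t i * (a i) ^ 4 := by
      rw [Finset.mul_sum, Finset.mul_sum, ← Finset.sum_sub_distrib]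
      refine Finset.sum_congr rfl fun i _ => ?_
      ring
    rw [hre] at hineq
    have hu2 : 0 < u ^ 2 / 2 := by positivity
    have h5 : u ^ 2 / 2 * ∑ i, t i * (a i) ^ 2
        ≤ u ^ 2 / 2 * (α ^ 2 + u ^ 2 / 2 * ∑ i, t i * (a i) ^ 4) := by nlinarith
    exact le_of_mul_le_mul_left h5 hu2
  -- epsilon argument
  rw [ge_iff_le]
  refine le_of_forall_pos_le_add fun ε hε => ?_
  set S : ℝ := ∑ i, t i * (a i) ^ 4 with hS
  have hSnn : 0 ≤ S := Finset.sum_nonneg fun i _ => mul_nonneg (ht i) (by positivity)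
  set u : ℝ := Real.sqrt (2 * ε / (S + 1)) with hud
  have hupos : 0 < u := Real.sqrt_pos.2 (by positivity)
  have hu2 : u ^ 2 = 2 * ε / (S + 1) := Real.sq_sqrt (by positivity)
  have := key u hupos
  have hle : u ^ 2 / 2 * S ≤ ε := by
    have h1 : u ^ 2 / 2 * S = ε * (S / (S + 1)) := by rw [hu2]; ring
    have h2 : S / (S + 1) ≤ 1 := div_le_one_of_le₀ (by linarith) (by positivity)
    nlinarith
  linarith
end

section
/- Let a, b ≥ 0 be real numbers with c = (a+b+1)/2 and (c−1)² ≤ 2ab, and let x, y ≥ 0. Then (x^c + y^c)² = (x + y)(x^a y^b + y^a x^b) if and only if x = y or {a, b} = {0, 1}. -/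
open Real Set

private lemma sinh_lt_mul_cosh {x : ℝ} (hx : 0 < x) : Real.sinh x < x * Real.cosh x := by
  have hmono : StrictMonoOn (fun t : ℝ => t * Real.cosh t - Real.sinh t) (Set.Ici 0) := by
    apply strictMonoOn_of_deriv_pos (convex_Ici 0)
    · exact ((continuous_id.mul Real.continuous_cosh).sub Real.continuous_sinh).continuousOn
    · intro t ht
      rw [interior_Ici] at ht
      have hd : HasDerivAt (fun t : ℝ => t * Real.cosh t - Real.sinh t) (t * Real.sinh t) t := by
        have h := ((hasDerivAt_id t).mul (Real.hasDerivAt_cosh t)).sub (Real.hasDerivAt_sinh t)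
        exact h.congr_deriv (by simp only [id_eq]; ring)
      rw [hd.deriv]
      exact mul_pos ht (Real.sinh_pos_iff.mpr ht)
  have h := hmono Set.self_mem_Ici (Set.mem_Ici.mpr hx.le) hx
  simp only [zero_mul, Real.cosh_zero, Real.sinh_zero, sub_zero, mul_zero] at h
  linarith

private lemma sinh_div_strictMono : StrictMonoOn (fun x : ℝ => Real.sinh x / x) (Set.Ioi 0) := by
  apply strictMonoOn_of_deriv_pos (convex_Ioi 0)
  · exact ContinuousOn.div Real.continuous_sinh.continuousOn continuousOn_id
      (fun t ht => ne_of_gt ht)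
  · intro t ht
    rw [interior_Ioi] at ht
    have hd : HasDerivAt (fun x : ℝ => Real.sinh x / x)
        ((Real.cosh t * t - Real.sinh t * 1) / t ^ 2) t :=
      (Real.hasDerivAt_sinh t).div (hasDerivAt_id t) (ne_of_gt ht)
    rw [hd.deriv]
    apply div_pos
    · nlinarith [sinh_lt_mul_cosh ht]
    · exact pow_pos ht 2

private lemma coshSqrt_strictConvexOn :
    StrictConvexOn ℝ (Set.Ici 0) (fun u : ℝ => Real.cosh (Real.sqrt u)) := by
  apply StrictMonoOn.strictConvexOn_of_deriv (convex_Ici 0)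
  · exact Real.continuous_cosh.comp_continuousOn Real.continuous_sqrt.continuousOn
  · rw [interior_Ici]
    have hderiv : ∀ u : ℝ, 0 < u →
        deriv (fun u : ℝ => Real.cosh (Real.sqrt u)) u
          = Real.sinh (Real.sqrt u) / Real.sqrt u / 2 := by
      intro u hu
      have hd : HasDerivAt (fun u : ℝ => Real.cosh (Real.sqrt u))
          (Real.sinh (Real.sqrt u) * (1 / (2 * Real.sqrt u))) u :=
        (Real.hasDerivAt_cosh (Real.sqrt u)).comp u (Real.hasDerivAt_sqrt (ne_of_gt hu))
      rw [hd.deriv, mul_one_div, div_div, mul_comm]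
    intro u hu v hv huv
    rw [Set.mem_Ioi] at hu hv
    rw [hderiv u hu, hderiv v hv]
    have h := sinh_div_strictMono (Set.mem_Ioi.mpr (Real.sqrt_pos.mpr hu))
      (Set.mem_Ioi.mpr (Real.sqrt_pos.mpr hv))
      (Real.sqrt_lt_sqrt hu.le huv)
    simp only at h
    linarith

private lemma key_strict {p q r : ℝ} (hp : 0 < p) (hq : 0 < q)
    (hpq : p ^ 2 + q ^ 2 ≤ r ^ 2) (hr : 0 ≤ r) :
    Real.cosh p + Real.cosh q < 1 + Real.cosh r := by
  set F : ℝ → ℝ := fun u => Real.cosh (Real.sqrt u) with hF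
  set S : ℝ := p ^ 2 + q ^ 2 with hSdef
  have hS : 0 < S := by positivity
  have hmem1 : S ∈ Set.Ici (0:ℝ) := le_of_lt hS
  have hmem0 : (0:ℝ) ∈ Set.Ici (0:ℝ) := Set.self_mem_Ici
  have hcoef1 : (0:ℝ) < p ^ 2 / S := by positivity
  have hcoef2 : (0:ℝ) < q ^ 2 / S := by positivity
  have hsum : p ^ 2 / S + q ^ 2 / S = 1 := by field_simp; exact hSdef.symm
  have h1 : F ((p^2/S) • S + (q^2/S) • 0) < (p^2/S) • F S + (q^2/S) • F 0 :=
    coshSqrt_strictConvexOn.2 hmem1 hmem0 (ne_of_gt hS) hcoef1 hcoef2 hsum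
  have hsum' : q ^ 2 / S + p ^ 2 / S = 1 := by rw [add_comm]; exact hsum
  have h2 : F ((q^2/S) • S + (p^2/S) • 0) < (q^2/S) • F S + (p^2/S) • F 0 :=
    coshSqrt_strictConvexOn.2 hmem1 hmem0 (ne_of_gt hS) hcoef2 hcoef1 hsum'
  have e1 : (p^2/S) • S + (q^2/S) • (0:ℝ) = p ^ 2 := by
    simp only [smul_eq_mul, mul_zero, add_zero]
    field_simp
  have e2 : (q^2/S) • S + (p^2/S) • (0:ℝ) = q ^ 2 := by
    simp only [smul_eq_mul, mul_zero, add_zero]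
    field_simp
  rw [e1] at h1
  rw [e2] at h2
  have hFp : F (p ^ 2) = Real.cosh p := by
    simp only [hF]
    rw [Real.sqrt_sq hp.le]
  have hFq : F (q ^ 2) = Real.cosh q := by
    simp only [hF]
    rw [Real.sqrt_sq hq.le]
  have hF0 : F 0 = 1 := by simp [hF]
  have hFS : F S ≤ Real.cosh r := by
    simp only [hF]
    rw [Real.cosh_le_cosh]
    rw [abs_of_nonneg (Real.sqrt_nonneg S), abs_of_nonneg hr]
    calc Real.sqrt S ≤ Real.sqrt (r ^ 2) := Real.sqrt_le_sqrt hpq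
      _ = r := Real.sqrt_sq hr
  have hmul : (p^2/S) * F S + (q^2/S) * F S = F S := by
    rw [← add_mul, hsum, one_mul]
  simp only [smul_eq_mul] at h1 h2
  rw [hFp] at h1
  rw [hFq] at h2
  rw [hF0] at h1 h2
  linarith [h1, h2, hmul, hFS, hsum]

private lemma cosh_eq_of_cosh_eq {X Y : ℝ} (h : Real.cosh X = Real.cosh Y) : |X| = |Y| :=
  le_antisymm (Real.cosh_le_cosh.mp h.le) (Real.cosh_le_cosh.mp h.ge)

private lemma main_pos (a b c : ℝ) (ha : 0 ≤ a) (hb : 0 ≤ b)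
    (hc : c = (a + b + 1) / 2) (h : (c - 1) ^ 2 ≤ 2 * a * b)
    (u v : ℝ) (huv : u ≠ v)
    (heq : (Real.exp (u*c) + Real.exp (v*c)) ^ 2 =
      (Real.exp u + Real.exp v) *
        (Real.exp (u*a) * Real.exp (v*b) + Real.exp (v*a) * Real.exp (u*b))) :
    ({a, b} : Set ℝ) = {0, 1} := by
  have hcpos : 0 < c := by rw [hc]; linarith
  have h1 : Real.exp (c*(u-v)) * Real.exp (c*(u+v)) = Real.exp (u*c) * Real.exp (u*c) := by
    simp only [← Real.exp_add, Real.exp_eq_exp]; ring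
  have h2 : Real.exp (-(c*(u-v))) * Real.exp (c*(u+v)) = Real.exp (v*c) * Real.exp (v*c) := by
    simp only [← Real.exp_add, Real.exp_eq_exp]; ring
  have h3 : Real.exp (c*(u+v)) = Real.exp (u*c) * Real.exp (v*c) := by
    simp only [← Real.exp_add, Real.exp_eq_exp]; ring
  have h4 : Real.exp ((a-b+1)*(u-v)/2) * Real.exp (c*(u+v))
      = Real.exp u * (Real.exp (u*a) * Real.exp (v*b)) := by
    simp only [← Real.exp_add, Real.exp_eq_exp]; rw [hc]; ring
  have h5 : Real.exp (-((a-b+1)*(u-v)/2)) * Real.exp (c*(u+v))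
      = Real.exp v * (Real.exp (v*a) * Real.exp (u*b)) := by
    simp only [← Real.exp_add, Real.exp_eq_exp]; rw [hc]; ring
  have h6 : Real.exp ((a-b-1)*(u-v)/2) * Real.exp (c*(u+v))
      = Real.exp v * (Real.exp (u*a) * Real.exp (v*b)) := by
    simp only [← Real.exp_add, Real.exp_eq_exp]; rw [hc]; ring
  have h7 : Real.exp (-((a-b-1)*(u-v)/2)) * Real.exp (c*(u+v))
      = Real.exp u * (Real.exp (v*a) * Real.exp (u*b)) := by
    simp only [← Real.exp_add, Real.exp_eq_exp]; rw [hc]; ring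
  have hmul : (Real.cosh ((a-b+1)*(u-v)/2) + Real.cosh ((a-b-1)*(u-v)/2))
        * (2 * Real.exp (c*(u+v)))
      = (1 + Real.cosh (c*(u-v))) * (2 * Real.exp (c*(u+v))) := by
    rw [Real.cosh_eq, Real.cosh_eq, Real.cosh_eq]
    linear_combination -heq + h4 + h5 + h6 + h7 - h1 - h2 - 2*h3
  have hfac : (2 : ℝ) * Real.exp (c*(u+v)) ≠ 0 := by positivity
  have hstar : Real.cosh ((a-b+1)*(u-v)/2) + Real.cosh ((a-b-1)*(u-v)/2)
      = 1 + Real.cosh (c*(u-v)) := mul_right_cancel₀ hfac hmul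
  have hD : u - v ≠ 0 := sub_ne_zero.mpr huv
  have hDpos : 0 < |u - v| := abs_pos.mpr hD
  by_cases hk1 : a - b + 1 = 0
  · rw [hk1] at hstar
    simp only [zero_mul, zero_div, Real.cosh_zero] at hstar
    have hcc : Real.cosh ((a-b-1)*(u-v)/2) = Real.cosh (c*(u-v)) := by linarith
    have habs := cosh_eq_of_cosh_eq hcc
    have hab : a - b - 1 = -2 := by linarith
    rw [hab, show (-2:ℝ)*(u-v)/2 = -(u-v) by ring, abs_neg, abs_mul,
      abs_of_pos hcpos] at habs
    have hzero : (c - 1) * |u - v| = 0 := by linarith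
    have hc1 : c = 1 := by
      rcases mul_eq_zero.mp hzero with h' | h'
      · linarith
      · exact absurd h' (ne_of_gt hDpos)
    have hA : a = 0 := by rw [hc] at hc1; linarith
    have hB : b = 1 := by rw [hc] at hc1; linarith
    rw [hA, hB]
  · by_cases hk2 : a - b - 1 = 0
    · rw [hk2] at hstar
      simp only [zero_mul, zero_div, Real.cosh_zero] at hstar
      have hcc : Real.cosh ((a-b+1)*(u-v)/2) = Real.cosh (c*(u-v)) := by linarith
      have habs := cosh_eq_of_cosh_eq hcc
      have hab : a - b + 1 = 2 := by linarith
      rw [hab, show (2:ℝ)*(u-v)/2 = u-v by ring, abs_mul, abs_of_pos hcpos] at habs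
      have hzero : (c - 1) * |u - v| = 0 := by linarith
      have hc1 : c = 1 := by
        rcases mul_eq_zero.mp hzero with h' | h'
        · linarith
        · exact absurd h' (ne_of_gt hDpos)
      have hA : a = 1 := by rw [hc] at hc1; linarith
      have hB : b = 0 := by rw [hc] at hc1; linarith
      rw [hA, hB]
      exact Set.pair_comm 1 0
    · exfalso
      have hp : 0 < |(a-b+1)*(u-v)/2| := abs_pos.mpr (by
        intro hz
        rcases mul_eq_zero.mp (by linarith [hz] : (a-b+1)*(u-v) = 0) with h' | h'
        · exact hk1 h'
        · exact hD h')
      have hq : 0 < |(a-b-1)*(u-v)/2| := abs_pos.mpr (by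
        intro hz
        rcases mul_eq_zero.mp (by linarith [hz] : (a-b-1)*(u-v) = 0) with h' | h'
        · exact hk2 h'
        · exact hD h')
      have hpq : |(a-b+1)*(u-v)/2| ^ 2 + |(a-b-1)*(u-v)/2| ^ 2 ≤ |c*(u-v)| ^ 2 := by
        rw [sq_abs, sq_abs, sq_abs]
        have hiden : c ^ 2 - ((a-b+1)^2 + (a-b-1)^2) / 4 = 2*a*b - (c-1)^2 := by
          rw [hc]; ring
        have hkey : ((a-b+1)^2 + (a-b-1)^2) / 4 ≤ c ^ 2 := by linarith [h, hiden]
        have hprod := mul_le_mul_of_nonneg_right hkey (sq_nonneg (u - v))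
        have eL : ((a-b+1)*(u-v)/2)^2 + ((a-b-1)*(u-v)/2)^2
            = (((a-b+1)^2 + (a-b-1)^2)/4) * (u-v)^2 := by ring
        have eR : (c*(u-v))^2 = c^2 * (u-v)^2 := by ring
        linarith [hprod, eL, eR]
      have hlt := key_strict hp hq hpq (abs_nonneg (c*(u-v)))
      rw [Real.cosh_abs, Real.cosh_abs, Real.cosh_abs] at hlt
      linarith [hstar, hlt]

theorem two_var_cyclic_eq_iff (a b c : ℝ) (ha : 0 ≤ a) (hb : 0 ≤ b)
    (hc : c = (a + b + 1) / 2) (h : (c - 1) ^ 2 ≤ 2 * a * b)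
    (x y : ℝ) (hx : 0 ≤ x) (hy : 0 ≤ y) :
    (x ^ c + y ^ c) ^ 2 = (x + y) * (x ^ a * y ^ b + y ^ a * x ^ b) ↔
      x = y ∨ ({a, b} : Set ℝ) = {0, 1} := by
  have hcpos : 0 < c := by rw [hc]; linarith
  constructor
  · intro heq
    by_cases hxy : x = y
    · exact Or.inl hxy
    right
    by_cases hA : a = 0
    · have hle : (c - 1) ^ 2 ≤ 0 := by rw [hA] at h; linarith
      have h0 : (c - 1) ^ 2 = 0 := le_antisymm hle (sq_nonneg _)
      have hc1 : c = 1 := by nlinarith [h0]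
      have hb1 : b = 1 := by rw [hA] at hc; rw [hc] at hc1; linarith
      rw [hA, hb1]
    by_cases hB : b = 0
    · have hle : (c - 1) ^ 2 ≤ 0 := by rw [hB] at h; linarith
      have h0 : (c - 1) ^ 2 = 0 := le_antisymm hle (sq_nonneg _)
      have hc1 : c = 1 := by nlinarith [h0]
      have ha1 : a = 1 := by rw [hB] at hc; rw [hc] at hc1; linarith
      rw [hB, ha1]
      exact Set.pair_comm 1 0
    have hA' : 0 < a := lt_of_le_of_ne ha (Ne.symm hA)
    have hB' : 0 < b := lt_of_le_of_ne hb (Ne.symm hB)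
    by_cases hx0 : x = 0
    · exfalso
      have hy' : 0 < y := lt_of_le_of_ne hy (fun hh => hxy (by rw [hx0]; exact hh))
      rw [hx0] at heq
      rw [Real.zero_rpow (ne_of_gt hcpos), Real.zero_rpow (ne_of_gt hA'),
        Real.zero_rpow (ne_of_gt hB')] at heq
      simp only [zero_add, zero_mul, mul_zero, add_zero] at heq
      have hpos : (0:ℝ) < (y ^ c) ^ 2 := by positivity
      nlinarith [hpos, heq]
    by_cases hy0 : y = 0
    · exfalso
      have hx' : 0 < x := lt_of_le_of_ne hx (Ne.symm hx0)
      rw [hy0] at heq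
      rw [Real.zero_rpow (ne_of_gt hcpos), Real.zero_rpow (ne_of_gt hA'),
        Real.zero_rpow (ne_of_gt hB')] at heq
      simp only [add_zero, zero_mul, mul_zero, zero_add] at heq
      have hpos : (0:ℝ) < (x ^ c) ^ 2 := by positivity
      nlinarith [hpos, heq]
    · have hx' : 0 < x := lt_of_le_of_ne hx (Ne.symm hx0)
      have hy' : 0 < y := lt_of_le_of_ne hy (Ne.symm hy0)
      obtain ⟨u, rfl⟩ : ∃ u : ℝ, x = Real.exp u := ⟨Real.log x, (Real.exp_log hx').symm⟩
      obtain ⟨v, rfl⟩ : ∃ v : ℝ, y = Real.exp v := ⟨Real.log y, (Real.exp_log hy').symm⟩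
      have erpow : ∀ (w t : ℝ), Real.exp w ^ t = Real.exp (w * t) := fun w t => by
        rw [Real.rpow_def_of_pos (Real.exp_pos w), Real.log_exp]
      rw [erpow, erpow, erpow, erpow, erpow, erpow] at heq
      have huv : u ≠ v := fun hh => hxy (by rw [hh])
      exact main_pos a b c ha hb hc h u v huv heq
  · intro hor
    rcases hor with rfl | hset
    · by_cases hx0 : x = 0
      · rw [hx0, Real.zero_rpow (ne_of_gt hcpos)]
        simp
      · have hx' : 0 < x := lt_of_le_of_ne hx (Ne.symm hx0)
        have h1 : x ^ c * x ^ c = x ^ (a + b + 1) := by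
          rw [← Real.rpow_add hx', hc]
          ring_nf
        have h2 : x ^ (a + b + 1) = x ^ a * x ^ b * x := by
          rw [Real.rpow_add hx' (a+b) 1, Real.rpow_add hx' a b, Real.rpow_one]
        linear_combination 4*h1 + 4*h2
    · have ha01 : a = 0 ∨ a = 1 := by
        have hmm : a ∈ ({0, 1} : Set ℝ) := hset ▸ Set.mem_insert a {b}
        simpa using hmm
      have hb01 : b = 0 ∨ b = 1 := by
        have hmm : b ∈ ({0, 1} : Set ℝ) := hset ▸ Set.mem_insert_of_mem a rfl
        simpa using hmm
      have h0mem : (0:ℝ) ∈ ({a, b} : Set ℝ) := hset ▸ Set.mem_insert 0 {1}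
      have h1mem : (1:ℝ) ∈ ({a, b} : Set ℝ) := by rw [hset]; exact Set.mem_insert_of_mem 0 rfl
      simp only [Set.mem_insert_iff, Set.mem_singleton_iff] at h0mem h1mem
      have hcase : (a = 0 ∧ b = 1) ∨ (a = 1 ∧ b = 0) := by
        rcases ha01 with h' | h' <;> rcases hb01 with h'' | h'' <;>
          simp [h', h''] at h0mem h1mem ⊢
      rcases hcase with ⟨rfl, rfl⟩ | ⟨rfl, rfl⟩ <;>
      · have hc1 : c = 1 := by rw [hc]; ring
        rw [hc1]
        simp only [Real.rpow_zero, Real.rpow_one]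
        ring
end

section
/- Let a, b ≥ 0 be real numbers satisfying 2a + 1 ≥ b, b ≥ (a−1)/2, and (a−1)/2 ≥ −b/2, and set c = (a+b+1)/2. Then for all real x, y, z ≥ 0, (x^c + y^c + z^c)² ≥ (x + y + z)(x^a y^b + y^a z^b + z^a x^b). -/
/-!
Expanding, the right side is the cyclic sum of `x^a y^b (x + y + z)`, i.e. of the monomials
`x^(a+1) y^b`, `x^a y^(b+1)`, `x^a y^b z`, and the left side is the cyclic sum of
`x^(2c) + 2 x^c y^c`. Since `2c = a + b + 1`, weighted AM-GM bounds each of the three monomials by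
a convex combination of `x^(2c), y^(2c), z^(2c), x^c y^c, y^c z^c, z^c x^c`, and the weights can
be chosen so that their cyclic sums use up the left side exactly. The choice depends on whether
`a - b ≥ 1`, `|a - b| ≤ 1` or `b - a ≥ 1`; the last case is the mirror image of the first under
`(a, b, x, y) ↦ (b, a, y, x)`.
-/

open Real Finset

theorem Real.prod_rpow_sum_le_sum_mul_prod_rpow {ι κ : Type*} (s : Finset ι) (t : Finset κ)
    (w : ι → ℝ) (v : ι → κ → ℝ) (x : κ → ℝ) (hw : ∀ i ∈ s, 0 ≤ w i) (hw₁ : ∑ i ∈ s, w i = 1)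
    (hv : ∀ i ∈ s, ∀ k ∈ t, 0 ≤ v i k) (hx : ∀ k ∈ t, 0 ≤ x k) :
    ∏ k ∈ t, x k ^ (∑ i ∈ s, w i * v i k) ≤ ∑ i ∈ s, w i * ∏ k ∈ t, x k ^ v i k :=
  calc ∏ k ∈ t, x k ^ (∑ i ∈ s, w i * v i k)
      = ∏ k ∈ t, ∏ i ∈ s, (x k ^ v i k) ^ w i := prod_congr rfl fun k hk => by
        rw [rpow_sum_of_nonneg (hx k hk) fun i hi => mul_nonneg (hw i hi) (hv i hi k hk)]
        exact prod_congr rfl fun i _ => by rw [mul_comm, rpow_mul (hx k hk)]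
    _ = ∏ i ∈ s, (∏ k ∈ t, x k ^ v i k) ^ w i := by
        rw [prod_comm]
        exact prod_congr rfl fun i _ =>
          finsetProd_rpow t _ (fun k hk => rpow_nonneg (hx k hk) _) _
    _ ≤ ∑ i ∈ s, w i * ∏ k ∈ t, x k ^ v i k :=
        geom_mean_le_arith_mean_weighted s w _ hw hw₁
          fun i _ => prod_nonneg fun k hk => rpow_nonneg (hx k hk) _

theorem two_mul_rpow_mul_rpow_mul_rpow_le (c e₁ e₂ e₃ n₁ n₂ n₃ n₄ n₅ n₆ x y z : ℝ) (hc : 0 < c)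
    (hn₁ : 0 ≤ n₁) (hn₂ : 0 ≤ n₂) (hn₃ : 0 ≤ n₃) (hn₄ : 0 ≤ n₄) (hn₅ : 0 ≤ n₅) (hn₆ : 0 ≤ n₆)
    (hn : n₁ + n₂ + n₃ + n₄ + n₅ + n₆ = 2 * c)
    (he₁ : 2 * n₁ + n₄ + n₆ = 2 * e₁) (he₂ : 2 * n₂ + n₄ + n₅ = 2 * e₂)
    (he₃ : 2 * n₃ + n₅ + n₆ = 2 * e₃) (hx : 0 ≤ x) (hy : 0 ≤ y) (hz : 0 ≤ z) :
    2 * c * (x ^ e₁ * y ^ e₂ * z ^ e₃) ≤ n₁ * (x ^ c) ^ 2 + n₂ * (y ^ c) ^ 2 + n₃ * (z ^ c) ^ 2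
      + n₄ * (x ^ c * y ^ c) + n₅ * (y ^ c * z ^ c) + n₆ * (z ^ c * x ^ c) := by
  have h2c : 0 < 2 * c := by positivity
  have hexp (p q r e : ℝ) (h : 2 * p + q + r = 2 * e) :
      p / (2 * c) * (2 * c) + q / (2 * c) * c + r / (2 * c) * c = e := by
    field_simp; linarith
  have hsq {t : ℝ} (ht : 0 ≤ t) : t ^ (2 * c) = (t ^ c) ^ 2 := by
    rw [mul_comm, ← rpow_mul_natCast ht, Nat.cast_ofNat]
  have key := prod_rpow_sum_le_sum_mul_prod_rpow univ univ
    (fun i => ![n₁, n₂, n₃, n₄, n₅, n₆] i / (2 * c))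
    ![![2 * c, 0, 0], ![0, 2 * c, 0], ![0, 0, 2 * c], ![c, c, 0], ![0, c, c], ![c, 0, c]]
    ![x, y, z]
    (fun i _ => div_nonneg (by fin_cases i <;> assumption) h2c.le)
    (by simp only [Fin.sum_univ_six, Matrix.cons_val_zero, Matrix.cons_val_one, Matrix.cons_val]
        field_simp; linarith)
    (fun i _ k _ => by fin_cases i <;> fin_cases k <;> simp [hc.le])
    (fun k _ => by fin_cases k <;> assumption)
  simp only [Fin.sum_univ_six, Fin.prod_univ_three, Matrix.cons_val_zero, Matrix.cons_val_one,
    Matrix.cons_val, mul_zero, add_zero, zero_add, rpow_zero, mul_one,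
    one_mul] at key
  rw [hexp _ _ _ _ he₁, hexp _ _ _ _ he₂, hexp _ _ _ _ he₃, hsq hx, hsq hy, hsq hz] at key
  calc 2 * c * (x ^ e₁ * y ^ e₂ * z ^ e₃) ≤ 2 * c * (n₁ / (2 * c) * (x ^ c) ^ 2
        + n₂ / (2 * c) * (y ^ c) ^ 2 + n₃ / (2 * c) * (z ^ c) ^ 2 + n₄ / (2 * c) * (x ^ c * y ^ c)
        + n₅ / (2 * c) * (y ^ c * z ^ c) + n₆ / (2 * c) * (x ^ c * z ^ c)) := by gcongr
    _ = _ := by field_simp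

theorem rpow_mul_rpow_mul_add_add {a b x y z : ℝ} (ha : 0 ≤ a) (hb : 0 ≤ b) (hx : 0 ≤ x)
    (hy : 0 ≤ y) :
    x ^ a * y ^ b * (x + y + z) =
      x ^ (a + 1) * y ^ b * z ^ (0 : ℝ) + x ^ a * y ^ (b + 1) * z ^ (0 : ℝ)
        + x ^ a * y ^ b * z ^ (1 : ℝ) := by
  rw [rpow_add_one' hx (by positivity), rpow_add_one' hy (by positivity), rpow_zero, rpow_one]
  ring

def CyclicCertificate (a b c : ℝ) : Prop :=
  ∃ n₁ n₂ n₃ n₄ n₅ n₆ : ℝ, n₁ + n₂ + n₃ = a + b + 1 ∧ n₄ + n₅ + n₆ = 2 * (a + b + 1) ∧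
    ∀ x y z : ℝ, 0 ≤ x → 0 ≤ y → 0 ≤ z →
      (a + b + 1) * (x ^ a * y ^ b * (x + y + z)) ≤
        n₁ * (x ^ c) ^ 2 + n₂ * (y ^ c) ^ 2 + n₃ * (z ^ c) ^ 2
          + n₄ * (x ^ c * y ^ c) + n₅ * (y ^ c * z ^ c) + n₆ * (z ^ c * x ^ c)

namespace CyclicCertificate

variable {a b c : ℝ}

theorem swap (h : CyclicCertificate a b c) : CyclicCertificate b a c := by
  obtain ⟨n₁, n₂, n₃, n₄, n₅, n₆, hsq, hmix, hle⟩ := h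
  refine ⟨n₂, n₁, n₃, n₄, n₆, n₅, by linarith, by linarith, fun x y z hx hy hz => ?_⟩
  linear_combination hle y x z hy hx hz

theorem sum_mul_le_sq (h : CyclicCertificate a b c) (hs : 0 < a + b + 1) :
    ∀ x y z : ℝ, 0 ≤ x → 0 ≤ y → 0 ≤ z →
      (x + y + z) * (x ^ a * y ^ b + y ^ a * z ^ b + z ^ a * x ^ b) ≤ (x ^ c + y ^ c + z ^ c) ^ 2 := by
  obtain ⟨n₁, n₂, n₃, n₄, n₅, n₆, hsq, hmix, hle⟩ := h
  intro x y z hx hy hz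
  refine le_of_mul_le_mul_left ?_ hs
  linear_combination hle x y z hx hy hz + hle y z x hy hz hx + hle z x y hz hx hy
    + ((x ^ c) ^ 2 + (y ^ c) ^ 2 + (z ^ c) ^ 2) * hsq
    + (x ^ c * y ^ c + y ^ c * z ^ c + z ^ c * x ^ c) * hmix

end CyclicCertificate

theorem cyclicCertificate_of_add_one_le {a b : ℝ} (hb : 0 ≤ b) (hba : b + 1 ≤ a)
    (hab : a ≤ 2 * b + 1) : CyclicCertificate a b ((a + b + 1) / 2) := by
  have hc : 0 < (a + b + 1) / 2 := by linarith
  refine ⟨2 * a - b, 2 * b + 1 - a, 0, 2 * a + 2 * b, 0, 2, by ring, by ring,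
    fun x y z hx hy hz => ?_⟩
  have hP := two_mul_rpow_mul_rpow_mul_rpow_le _ (a + 1) b 0 (a + 1 - b) 0 0 (2 * b) 0 0 x y z hc
    (by linarith) le_rfl le_rfl (by linarith) le_rfl le_rfl (by ring) (by ring) (by ring) (by ring)
    hx hy hz
  have hT := two_mul_rpow_mul_rpow_mul_rpow_le _ a (b + 1) 0 (a - b - 1) 0 0 (2 * b + 2) 0 0 x y z hc
    (by linarith) le_rfl le_rfl (by linarith) le_rfl le_rfl (by ring) (by ring) (by ring) (by ring)
    hx hy hz
  have hU := two_mul_rpow_mul_rpow_mul_rpow_le _ a b 1 b (2 * b + 1 - a) 0 (2 * a - 2 * b - 2) 0 2 x y z hc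
    hb (by linarith) le_rfl (by linarith) le_rfl zero_le_two (by ring) (by ring) (by ring) (by ring)
    hx hy hz
  rw [rpow_mul_rpow_mul_add_add (by linarith) hb hx hy]
  linear_combination hP + hT + hU

theorem cyclicCertificate_of_le_add_one {a b : ℝ} (ha : 0 ≤ a) (hb : 0 ≤ b) (hab₁ : 1 ≤ a + b)
    (hab : a ≤ b + 1) (hba : b ≤ a + 1) : CyclicCertificate a b ((a + b + 1) / 2) := by
  have hc : 0 < (a + b + 1) / 2 := by linarith
  refine ⟨a + 1 - b + (a + b - 1) / 2, b + 1 - a + (a + b - 1) / 2, 0, 2 * a + 2 * b,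
    1 + b - a, 1 + a - b, by ring, by ring, fun x y z hx hy hz => ?_⟩
  have hP := two_mul_rpow_mul_rpow_mul_rpow_le _ (a + 1) b 0 (a + 1 - b) 0 0 (2 * b) 0 0 x y z hc
    (by linarith) le_rfl le_rfl (by linarith) le_rfl le_rfl (by ring) (by ring) (by ring) (by ring)
    hx hy hz
  have hT := two_mul_rpow_mul_rpow_mul_rpow_le _ a (b + 1) 0 0 (b + 1 - a) 0 (2 * a) 0 0 x y z hc
    le_rfl (by linarith) le_rfl (by linarith) le_rfl le_rfl (by ring) (by ring) (by ring) (by ring)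
    hx hy hz
  have hU := two_mul_rpow_mul_rpow_mul_rpow_le _ a b 1 ((a + b - 1) / 2) ((a + b - 1) / 2) 0 0 (1 + b - a)
    (1 + a - b) x y z hc (by linarith) (by linarith) le_rfl le_rfl (by linarith) (by linarith)
    (by ring) (by ring) (by ring) (by ring) hx hy hz
  rw [rpow_mul_rpow_mul_add_add ha hb hx hy]
  linear_combination hP + hT + hU

theorem three_var_cyclic_ineq (a b c : ℝ) (ha : 0 ≤ a) (hb : 0 ≤ b)
    (h1 : 2 * a + 1 ≥ b) (h2 : b ≥ (a - 1) / 2) (h3 : (a - 1) / 2 ≥ -b / 2)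
    (hc : c = (a + b + 1) / 2) :
    ∀ x y z : ℝ, 0 ≤ x → 0 ≤ y → 0 ≤ z →
      (x ^ c + y ^ c + z ^ c) ^ 2 ≥
        (x + y + z) * (x ^ a * y ^ b + y ^ a * z ^ b + z ^ a * x ^ b) := by
  subst hc
  have hcert : CyclicCertificate a b ((a + b + 1) / 2) := by
    rcases le_total (b + 1) a with hba | hab
    · exact cyclicCertificate_of_add_one_le hb hba (by linarith)
    rcases le_total (a + 1) b with hab' | hba
    · have h := (cyclicCertificate_of_add_one_le ha hab' (by linarith)).swap
      rwa [add_comm b a] at h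
    · exact cyclicCertificate_of_le_add_one ha hb (by linarith) hab hba
  exact hcert.sum_mul_le_sq (by linarith)
end

section
/- Let a ≥ b ≥ 0 be real numbers with a − b − 1 ≥ 0 and 2b − a + 1 ≥ 0, and set c = (a+b+1)/2. Then for all real x, y, z ≥ 0, ((2a−b)/(2c))·x^{2c} + ((2b−a+1)/(2c))·y^{2c} + ((a+b)/c)·x^c y^c + (1/c)·x^c z^c ≥ (x + y + z)·x^a y^b. -/
theorem jensen_step_ineq (a b c : ℝ) (hb : 0 ≤ b) (hab : b ≤ a)
    (h1 : 0 ≤ a - b - 1) (h2 : 0 ≤ 2 * b - a + 1) (hc : c = (a + b + 1) / 2) :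
    ∀ x y z : ℝ, 0 ≤ x → 0 ≤ y → 0 ≤ z →
      (2 * a - b) / (2 * c) * x ^ (2 * c) + (2 * b - a + 1) / (2 * c) * y ^ (2 * c) +
          (a + b) / c * (x ^ c * y ^ c) + 1 / c * (x ^ c * z ^ c) ≥
        (x + y + z) * (x ^ a * y ^ b) := by
  intro x y z hx hy hz
  have ha1 : (1:ℝ) ≤ a := by linarith
  have hcpos : 0 < c := by rw [hc]; linarith
  have hc0 : c ≠ 0 := ne_of_gt hcpos
  have hXnn : (0:ℝ) ≤ x ^ (2*c) := Real.rpow_nonneg hx _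
  have hYnn : (0:ℝ) ≤ y ^ (2*c) := Real.rpow_nonneg hy _
  have hMnn : (0:ℝ) ≤ x ^ c * y ^ c :=
    mul_nonneg (Real.rpow_nonneg hx _) (Real.rpow_nonneg hy _)
  have hWnn : (0:ℝ) ≤ x ^ c * z ^ c :=
    mul_nonneg (Real.rpow_nonneg hx _) (Real.rpow_nonneg hz _)
  have hXpow : ∀ w : ℝ, (x ^ (2*c)) ^ w = x ^ (2*c*w) := fun w => by
    rw [← Real.rpow_mul hx]
  have hYpow : ∀ w : ℝ, (y ^ (2*c)) ^ w = y ^ (2*c*w) := fun w => by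
    rw [← Real.rpow_mul hy]
  have hMpow : ∀ w : ℝ, (x ^ c * y ^ c) ^ w = x ^ (c*w) * y ^ (c*w) := fun w => by
    rw [Real.mul_rpow (Real.rpow_nonneg hx _) (Real.rpow_nonneg hy _),
      ← Real.rpow_mul hx, ← Real.rpow_mul hy]
  have hWpow : ∀ w : ℝ, (x ^ c * z ^ c) ^ w = x ^ (c*w) * z ^ (c*w) := fun w => by
    rw [Real.mul_rpow (Real.rpow_nonneg hx _) (Real.rpow_nonneg hz _),
      ← Real.rpow_mul hx, ← Real.rpow_mul hz]
  -- Inequality 1 : x^(a+1) * y^b ≤ ((a+1-b)/(2c)) X + (b/c) M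
  have ineq1 : x ^ (a+1) * y ^ b ≤
      (a+1-b)/(2*c) * x ^ (2*c) + b/c * (x ^ c * y ^ c) := by
    have hw1 : (0:ℝ) ≤ (a+1-b)/(2*c) := div_nonneg (by linarith) (by linarith)
    have hw2 : (0:ℝ) ≤ b/c := by positivity
    have hsum : (a+1-b)/(2*c) + b/c = 1 := by
      field_simp
      linear_combination (-2) * hc
    have key := Real.geom_mean_le_arith_mean2_weighted hw1 hw2 hXnn hMnn hsum
    rw [hXpow, hMpow] at key
    have e1 : 2*c*((a+1-b)/(2*c)) = a+1-b := by field_simp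
    have e2 : c*(b/c) = b := by field_simp
    rw [e1, e2, ← mul_assoc, ← Real.rpow_add_of_nonneg hx (by linarith) hb] at key
    have e3 : a + 1 - b + b = a + 1 := by ring
    rw [e3] at key
    exact key
  -- Inequality 2 : x^a * y^(b+1) ≤ (b/(2c)) X + ((2b-a+1)/(2c)) Y + ((a-b)/c) M
  have ineq2 : x ^ a * y ^ (b+1) ≤
      b/(2*c) * x ^ (2*c) + (2*b-a+1)/(2*c) * y ^ (2*c) + (a-b)/c * (x ^ c * y ^ c) := by
    have hw1 : (0:ℝ) ≤ b/(2*c) := by positivity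
    have hw2 : (0:ℝ) ≤ (2*b-a+1)/(2*c) := div_nonneg (by linarith) (by linarith)
    have hw3 : (0:ℝ) ≤ (a-b)/c := div_nonneg (by linarith) (by linarith)
    have hsum : b/(2*c) + (2*b-a+1)/(2*c) + (a-b)/c = 1 := by
      field_simp
      linear_combination (-2) * hc
    have key := Real.geom_mean_le_arith_mean3_weighted hw1 hw2 hw3 hXnn hYnn hMnn hsum
    rw [hXpow, hYpow, hMpow] at key
    have e1 : 2*c*(b/(2*c)) = b := by field_simp
    have e2 : 2*c*((2*b-a+1)/(2*c)) = 2*b-a+1 := by field_simp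
    have e3 : c*((a-b)/c) = a-b := by field_simp
    rw [e1, e2, e3] at key
    calc x ^ a * y ^ (b+1)
        = x ^ b * y ^ (2*b-a+1) * (x ^ (a-b) * y ^ (a-b)) := by
          rw [mul_mul_mul_comm, ← Real.rpow_add_of_nonneg hx hb (by linarith),
            ← Real.rpow_add_of_nonneg hy (by linarith) (by linarith)]
          ring_nf
      _ ≤ _ := key
  -- Inequality 3 : z * (x^a * y^b) ≤ ((a-b-1)/(2c)) X + (b/c) M + (1/c) W
  have ineq3 : z * (x ^ a * y ^ b) ≤
      (a-b-1)/(2*c) * x ^ (2*c) + b/c * (x ^ c * y ^ c) + 1/c * (x ^ c * z ^ c) := by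
    have hw1 : (0:ℝ) ≤ (a-b-1)/(2*c) := div_nonneg (by linarith) (by linarith)
    have hw2 : (0:ℝ) ≤ b/c := by positivity
    have hw3 : (0:ℝ) ≤ 1/c := by positivity
    have hsum : (a-b-1)/(2*c) + b/c + 1/c = 1 := by
      field_simp
      linear_combination (-2) * hc
    have key := Real.geom_mean_le_arith_mean3_weighted hw1 hw2 hw3 hXnn hMnn hWnn hsum
    rw [hXpow, hMpow, hWpow] at key
    have e1 : 2*c*((a-b-1)/(2*c)) = a-b-1 := by field_simp
    have e2 : c*(b/c) = b := by field_simp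
    have e3 : c*(1/c) = 1 := by field_simp
    rw [e1, e2, e3, Real.rpow_one, Real.rpow_one] at key
    have hxa : x ^ (a-b-1) * x ^ b * x = x ^ a := by
      calc x ^ (a-b-1) * x ^ b * x = x ^ (a-b-1+b) * x := by
            rw [Real.rpow_add_of_nonneg hx h1 hb]
        _ = x ^ (a-b-1+b) * x ^ (1:ℝ) := by rw [Real.rpow_one]
        _ = x ^ (a-b-1+b+1) := by
            rw [← Real.rpow_add_of_nonneg hx (by linarith) zero_le_one]
        _ = x ^ a := by ring_nf
    calc z * (x ^ a * y ^ b)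
        = x ^ (a-b-1) * (x ^ b * y ^ b) * (x * z) := by rw [← hxa]; ring
      _ ≤ _ := key
  -- Expand the RHS and combine
  have hexp : (x + y + z) * (x ^ a * y ^ b)
      = x ^ (a+1) * y ^ b + x ^ a * y ^ (b+1) + z * (x ^ a * y ^ b) := by
    rw [Real.rpow_add_of_nonneg hx (by linarith) zero_le_one,
      Real.rpow_add_of_nonneg hy hb zero_le_one, Real.rpow_one, Real.rpow_one]
    ring
  have hLHS : (2 * a - b) / (2 * c) * x ^ (2 * c) + (2 * b - a + 1) / (2 * c) * y ^ (2 * c) +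
      (a + b) / c * (x ^ c * y ^ c) + 1 / c * (x ^ c * z ^ c)
      = ((a+1-b)/(2*c) * x ^ (2*c) + b/c * (x ^ c * y ^ c))
        + (b/(2*c) * x ^ (2*c) + (2*b-a+1)/(2*c) * y ^ (2*c) + (a-b)/c * (x ^ c * y ^ c))
        + ((a-b-1)/(2*c) * x ^ (2*c) + b/c * (x ^ c * y ^ c) + 1/c * (x ^ c * z ^ c)) := by
    field_simp
    ring
  rw [ge_iff_le, hexp, hLHS]
  gcongr <;> linarith [ineq1, ineq2, ineq3]
end

section
/- Let a, b ≥ 0 be real numbers, set c = (a+b+1)/2, and let n ≥ 2 be an integer. If for all nonnegative real numbers x₁, …, xₙ (with x_{n+1} = x₁ cyclically) one has (Σᵢ₌₁ⁿ xᵢ^c)² ≥ (Σᵢ₌₁ⁿ xᵢ)(Σᵢ₌₁ⁿ xᵢ^a x_{i+1}^b), then the same inequality holds for n − 1 variables: for all nonnegative y₁, …, y_{n−1} (with y_n = y₁ cyclically), (Σᵢ₌₁^{n−1} yᵢ^c)² ≥ (Σᵢ₌₁^{n−1} yᵢ)(Σᵢ₌₁^{n−1} yᵢ^a y_{i+1}^b).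 -/
/-!
Let `S`, `B`, `Q` be the three sums for `y₀, …, y_{m-1}` (with `m = n - 1`). Apply the
`n`-variable inequality to `y₀, …, y_{m-1}, y₀`: each sum gains exactly the term of `y₀`, namely
`s = y₀ ^ c`, `t = y₀` and `P = y₀ ^ a * y₀ ^ b`, and `s ^ 2 = t * P`.
So `(S + s) ^ 2 ≥ (B + t) * (Q + P)`, while two-term Cauchy–Schwarz gives
`√((B + t) * (Q + P)) ≥ √(B * Q) + √(t * P) = √(B * Q) + s`; hence `S ≥ √(B * Q)`.
-/

open Finset

theorem sqrt_mul_add_sqrt_mul_le {B t Q P : ℝ} (hB : 0 ≤ B) (ht : 0 ≤ t) (hQ : 0 ≤ Q)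
    (hP : 0 ≤ P) :
    √(B * Q) + √(t * P) ≤ √((B + t) * (Q + P)) := by
  have := Real.sum_sqrt_mul_sqrt_le univ (f := ![B, t]) (g := ![Q, P])
    (fun i => by fin_cases i <;> simpa) (fun i => by fin_cases i <;> simpa)
  simpa [Fin.sum_univ_two, Real.sqrt_mul, hB, ht, add_nonneg hB ht] using this

theorem mul_le_sq_of_add_mul_add_le_sq_add {B t Q P S s : ℝ} (hB : 0 ≤ B) (ht : 0 ≤ t)
    (hQ : 0 ≤ Q) (hP : 0 ≤ P) (hS : 0 ≤ S) (hs : 0 ≤ s) (hst : s ^ 2 = t * P)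
    (h : (B + t) * (Q + P) ≤ (S + s) ^ 2) : B * Q ≤ S ^ 2 := by
  have hs' : √(t * P) = s := by rw [← hst, Real.sqrt_sq hs]
  have : √(B * Q) + s ≤ S + s := calc
    √(B * Q) + s ≤ √((B + t) * (Q + P)) := hs' ▸ sqrt_mul_add_sqrt_mul_le hB ht hQ hP
    _ ≤ S + s := Real.sqrt_le_left (by positivity) |>.mpr h
  exact (Real.sqrt_le_left hS).mp (by linarith)

theorem rpow_half_add_sq {a b : ℝ} (ha : 0 ≤ a) (hb : 0 ≤ b) {t : ℝ} (ht : 0 ≤ t) :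
    (t ^ ((a + b + 1) / 2)) ^ 2 = t * (t ^ a * t ^ b) := by
  rw [← Real.rpow_mul_natCast ht, ← Real.rpow_add_of_nonneg ht ha hb,
    ← Real.rpow_one_add' ht (by positivity)]
  congr 1
  push_cast
  ring

theorem sum_range_succ_comp_mod {M : Type*} [AddCommMonoid M] (f : ℕ → M) (m : ℕ) :
    ∑ i ∈ range (m + 1), f (i % m) = ∑ i ∈ range m, f i + f 0 := by
  rw [sum_range_succ, Nat.mod_self]
  congr 1
  exact sum_congr rfl fun i hi => by rw [Nat.mod_eq_of_lt (mem_range.mp hi)]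

theorem sum_range_succ_comp_mod_succ_mod {M : Type*} [AddCommMonoid M] (g : ℕ → ℕ → M) (m : ℕ) :
    ∑ i ∈ range (m + 1), g (i % m) ((i + 1) % (m + 1) % m) =
      ∑ i ∈ range m, g i ((i + 1) % m) + g 0 0 := by
  rw [sum_range_succ, Nat.mod_self, Nat.mod_self, Nat.zero_mod]
  congr 1
  refine sum_congr rfl fun i hi => ?_
  have hi : i < m := mem_range.mp hi
  rw [Nat.mod_eq_of_lt hi, Nat.mod_eq_of_lt (by omega : i + 1 < m + 1)]

theorem cyclic_ineq_descend_general (a b c : ℝ) (ha : 0 ≤ a) (hb : 0 ≤ b)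
    (hc : c = (a + b + 1) / 2) (n : ℕ)
    (h : ∀ x : ℕ → ℝ, (∀ i, 0 ≤ x i) →
      (∑ i ∈ Finset.range n, x i ^ c) ^ 2 ≥
        (∑ i ∈ Finset.range n, x i) *
          (∑ i ∈ Finset.range n, x i ^ a * x ((i + 1) % n) ^ b)) :
    ∀ y : ℕ → ℝ, (∀ i, 0 ≤ y i) →
      (∑ i ∈ Finset.range (n - 1), y i ^ c) ^ 2 ≥
        (∑ i ∈ Finset.range (n - 1), y i) *
          (∑ i ∈ Finset.range (n - 1), y i ^ a * y ((i + 1) % (n - 1)) ^ b) := by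
  intro y hy
  rcases n with _ | m
  · simp
  rw [Nat.add_sub_cancel]
  have hx := h (fun i => y (i % m)) fun i => hy _
  rw [sum_range_succ_comp_mod (fun i => y i ^ c), sum_range_succ_comp_mod y,
    sum_range_succ_comp_mod_succ_mod (fun i j => y i ^ a * y j ^ b)] at hx
  subst hc
  have hy_rpow := fun i => Real.rpow_nonneg (hy i)
  exact mul_le_sq_of_add_mul_add_le_sq_add (sum_nonneg fun i _ => hy i) (hy 0)
    (sum_nonneg fun i _ => mul_nonneg (hy_rpow i a) (hy_rpow _ b)) (mul_nonneg (hy_rpow 0 a) (hy_rpow 0 b))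
    (sum_nonneg fun i _ => hy_rpow i _) (hy_rpow 0 _) (rpow_half_add_sq ha hb (hy 0)) hx

theorem cyclic_ineq_descend (a b c : ℝ) (ha : 0 ≤ a) (hb : 0 ≤ b)
    (hc : c = (a + b + 1) / 2) (n : ℕ) (hn : 2 ≤ n)
    (h : ∀ x : ℕ → ℝ, (∀ i, 0 ≤ x i) →
      (∑ i ∈ Finset.range n, x i ^ c) ^ 2 ≥
        (∑ i ∈ Finset.range n, x i) *
          (∑ i ∈ Finset.range n, x i ^ a * x ((i + 1) % n) ^ b)) :
    ∀ y : ℕ → ℝ, (∀ i, 0 ≤ y i) →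
      (∑ i ∈ Finset.range (n - 1), y i ^ c) ^ 2 ≥
        (∑ i ∈ Finset.range (n - 1), y i) *
          (∑ i ∈ Finset.range (n - 1), y i ^ a * y ((i + 1) % (n - 1)) ^ b) :=
  cyclic_ineq_descend_general a b c ha hb hc n h
end

section
/- Let r, s be nonnegative real numbers with r² + s² = 1 and (r, s) ≠ (0, 0). Then 2r²s² / (r³ + s³)² ≤ 1, with equality if and only if r = s. -/
/-! On the unit circle `(r³ + s³)² - 2r²s² = (r - s)² ((r + s)² - (rs)²)`, and for `r, s ≥ 0` the
second factor is positive because `(r + s)² = 1 + 2rs ≥ 1 > 1/4 ≥ (rs)²`. Hence the ratio is at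
most `1`, with equality exactly when `r = s`. -/

theorem cube_add_cube_sq_sub_of_sq_add_sq_eq_one {r s : ℝ} (h : r ^ 2 + s ^ 2 = 1) :
    (r ^ 3 + s ^ 3) ^ 2 - 2 * r ^ 2 * s ^ 2 = (r - s) ^ 2 * ((r + s) ^ 2 - (r * s) ^ 2) := by
  linear_combination (r ^ 4 + s ^ 4) * h

section UnitCircleFirstQuadrant

variable {r s : ℝ} (hr : 0 ≤ r) (hs : 0 ≤ s) (h : r ^ 2 + s ^ 2 = 1)
include hr hs h

theorem mul_sq_lt_add_sq_of_sq_add_sq_eq_one : (r * s) ^ 2 < (r + s) ^ 2 := by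
  nlinarith [mul_nonneg hr hs, sq_nonneg (r - s)]

theorem cube_add_cube_pos_of_sq_add_sq_eq_one : 0 < r ^ 3 + s ^ 3 := by
  nlinarith [mul_nonneg hr hs, pow_nonneg hr 3, pow_nonneg hs 3, sq_nonneg (r - s)]

end UnitCircleFirstQuadrant

theorem rs_ratio_le_one_general (r s : ℝ) (hr : 0 ≤ r) (hs : 0 ≤ s) (h : r ^ 2 + s ^ 2 = 1) :
    2 * r ^ 2 * s ^ 2 / (r ^ 3 + s ^ 3) ^ 2 ≤ 1 ∧
      (2 * r ^ 2 * s ^ 2 / (r ^ 3 + s ^ 3) ^ 2 = 1 ↔ r = s) := by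
  have hD : 0 < (r ^ 3 + s ^ 3) ^ 2 := pow_pos (cube_add_cube_pos_of_sq_add_sq_eq_one hr hs h) 2
  have hQ : 0 < (r + s) ^ 2 - (r * s) ^ 2 :=
    sub_pos.2 (mul_sq_lt_add_sq_of_sq_add_sq_eq_one hr hs h)
  have hdiff := cube_add_cube_sq_sub_of_sq_add_sq_eq_one h
  refine ⟨(div_le_one hD).2 (sub_nonneg.1 ?_), ?_⟩
  · rw [hdiff]; positivity
  · rw [div_eq_one_iff_eq hD.ne', eq_comm, ← sub_eq_zero, hdiff, mul_eq_zero,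
      or_iff_left hQ.ne', sq_eq_zero_iff, sub_eq_zero]

theorem rs_ratio_le_one (r s : ℝ) (hr : 0 ≤ r) (hs : 0 ≤ s) (h : r ^ 2 + s ^ 2 = 1)
    (hne : (r, s) ≠ (0, 0)) :
    2 * r ^ 2 * s ^ 2 / (r ^ 3 + s ^ 3) ^ 2 ≤ 1 ∧
      (2 * r ^ 2 * s ^ 2 / (r ^ 3 + s ^ 3) ^ 2 = 1 ↔ r = s) :=
  rs_ratio_le_one_general r s hr hs h
end
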